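/- arXiv:0902.1792 — 9 statements merged into one kernel-verified Lean document; each statement's English description precedes it below -/
import Mathlib

section
/- Let V be a finite ground set with marginals p_i ∈ [0,1], and let f : 2^V → ℝ be a non-decreasing submodular set function with f(∅) = 0. Then the correlation gap is bounded by the constant e/(e−1): L(f,V,{p_i}) ≤ (e/(e−1))·I(f,V,{p_i}). -/
open Finset

variable {W : Type*} [Fintype W] [DecidableEq W]

/-- Expected value of `f` under a distribution `α` on subsets of the ground set. -/
noncomputable def expVal (α : Finset W → ℝ) (f : Finset W → ℝ) : ℝ :=
  ∑ S : Finset W, α S * f S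

/-- `α` is a probability distribution on subsets of the ground set with marginals `p`. -/
def IsDistWithMarginals (p : W → ℝ) (α : Finset W → ℝ) : Prop :=
  (∀ S, 0 ≤ α S) ∧ (∑ S : Finset W, α S = 1) ∧
    (∀ i : W, ∑ S ∈ Finset.univ.filter (fun S => i ∈ S), α S = p i)

/-- The worst-case expected value `L(f,V,{p_i})`: supremum of the expected value of `f`
over all distributions with marginals `p`. -/
noncomputable def worstVal (p : W → ℝ) (f : Finset W → ℝ) : ℝ :=
  sSup {v | ∃ α, IsDistWithMarginals p α ∧ v = expVal α f}

/-- The expected value `I(f,V,{p_i})` of `f` when each element is included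
independently with probability `p i`. -/
noncomputable def indepVal (p : W → ℝ) (f : Finset W → ℝ) : ℝ :=
  ∑ S : Finset W, (∏ i ∈ S, p i) * (∏ i ∈ Sᶜ, (1 - p i)) * f S

/-- `χ` is an `(η,β)`-cost-sharing scheme for `f`.  An ordering of a subset `S` of the ground
set is encoded as a duplicate-free list `l` with `l.toFinset = S`; the restriction of the
ordering `l` to a subset `s` is `l.filter (· ∈ s)`.  The three conditions are:
`β`-budget balance, cross-monotonicity, and weak `η`-summability (the sum over `ℓ` of the
share of the `ℓ`-th element in the set of the first `ℓ` elements is at most `η·f(S)`). -/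
def IsCostShare (f : Finset W → ℝ) (η β : ℝ) (χ : List W → W → ℝ) : Prop :=
  (∀ l : List W, l ≠ [] → l.Nodup →
      ∑ i ∈ l.toFinset, χ l i ≤ f l.toFinset ∧ f l.toFinset / β ≤ ∑ i ∈ l.toFinset, χ l i) ∧
  (∀ l : List W, l.Nodup → ∀ s : Finset W, s ⊆ l.toFinset → ∀ i ∈ s,
      χ l i ≤ χ (l.filter (fun a => a ∈ s)) i) ∧
  (∀ l : List W, l ≠ [] → l.Nodup →
      ∑ ℓ : Fin l.length, χ (l.take (ℓ.1 + 1)) (l.get ℓ) ≤ η * f l.toFinset)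


/-!
Let `F` be the multilinear extension of `f` and `g t = F (t • p)`. Monotonicity and
submodularity give `f T ≤ F y + ∑ i ∈ T, ∂ᵢF y` for every set `T` and every `y ∈ [0,1]^V`;
averaging over `T ∼ α` with marginals `p` gives `E_α f ≤ g t + g' t` on `[0,1]`. Hence
`eᵗ (g t - E_α f)` is non-decreasing, and comparing `t = 0`, where `g 0 = f ∅ = 0`, with
`t = 1`, where `g 1 = I(f)`, gives `(e - 1) E_α f ≤ e I(f)`.
-/

/-- Grönwall-type estimate: `(eᵗ (g t - c))' = eᵗ (g t + g' t - c) ≥ 0`. -/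
lemma monotoneOn_exp_mul_sub_of_le_add_deriv {g g' : ℝ → ℝ} {c a b : ℝ}
    (hg : ∀ t ∈ Set.Icc a b, HasDerivAt g (g' t) t)
    (hc : ∀ t ∈ Set.Icc a b, c ≤ g t + g' t) :
    MonotoneOn (fun t => Real.exp t * (g t - c)) (Set.Icc a b) := by
  have hderiv : ∀ t ∈ Set.Icc a b, HasDerivAt (fun t => Real.exp t * (g t - c))
      (Real.exp t * (g t - c) + Real.exp t * g' t) t := fun t ht =>
    (Real.hasDerivAt_exp t).mul ((hg t ht).sub_const c)
  refine monotoneOn_of_hasDerivWithinAt_nonneg (convex_Icc a b)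
    (fun t ht => (hderiv t ht).continuousAt.continuousWithinAt)
    (fun t ht => (hderiv t (interior_subset ht)).hasDerivWithinAt) fun t ht => ?_
  have ht := interior_subset ht
  nlinarith [Real.exp_pos t, hc t ht]

section MultilinearExtension

variable {V : Type*} [Fintype V] [DecidableEq V]

noncomputable def indepProb (y : V → ℝ) (S : Finset V) : ℝ :=
  ∏ j, if j ∈ S then y j else 1 - y j

noncomputable def indepProbErase (y : V → ℝ) (i : V) (S : Finset V) : ℝ :=
  ∏ j ∈ univ.erase i, if j ∈ S then y j else 1 - y j

noncomputable def multilinearExt (f : Finset V → ℝ) (y : V → ℝ) : ℝ :=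
  ∑ S, indepProb y S * f S

/-- The partial derivative of `multilinearExt f` in the coordinate `y i`. -/
noncomputable def multilinearExtPartial (f : Finset V → ℝ) (y : V → ℝ) (i : V) : ℝ :=
  ∑ S, indepProb y S * (f (insert i S) - f (S.erase i))

lemma indepProb_eq_prod_mul_prod (y : V → ℝ) (S : Finset V) :
    indepProb y S = (∏ j ∈ S, y j) * ∏ j ∈ Sᶜ, (1 - y j) := by
  rw [indepProb, prod_ite]
  congr 2 <;> ext j <;> simp

lemma indepProb_eq_mul_indepProbErase (y : V → ℝ) (i : V) (S : Finset V) :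
    indepProb y S = (if i ∈ S then y i else 1 - y i) * indepProbErase y i S :=
  (mul_prod_erase univ _ (mem_univ i)).symm

lemma indepProbErase_insert (y : V → ℝ) (i : V) (S : Finset V) :
    indepProbErase y i (insert i S) = indepProbErase y i S :=
  prod_congr rfl fun j hj => by simp [ne_of_mem_erase hj]

lemma indepProb_nonneg {y : V → ℝ} (hy : ∀ i, 0 ≤ y i ∧ y i ≤ 1) (S : Finset V) :
    0 ≤ indepProb y S :=
  prod_nonneg fun j _ => by split_ifs <;> linarith [hy j]

lemma sum_indepProb (y : V → ℝ) : ∑ S, indepProb y S = 1 := by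
  have h := prod_add y (fun i => 1 - y i) univ
  simp only [add_sub_cancel, prod_const_one, powerset_univ, ← compl_eq_univ_sdiff] at h
  simp only [indepProb_eq_prod_mul_prod, ← h]

lemma indepVal_eq_multilinearExt (p : V → ℝ) (f : Finset V → ℝ) :
    indepVal p f = multilinearExt f p := by
  simp only [indepVal, multilinearExt, indepProb_eq_prod_mul_prod]

lemma multilinearExt_zero (f : Finset V → ℝ) : multilinearExt f 0 = f ∅ := by
  rw [multilinearExt, sum_eq_single ∅]
  · simp [indepProb]
  · intro S _ hS
    obtain ⟨i, hi⟩ := nonempty_iff_ne_empty.2 hS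
    rw [indepProb, prod_eq_zero (mem_univ i) (by simp [hi]), zero_mul]
  · simp

lemma multilinearExt_nonneg {f : Finset V → ℝ} {y : V → ℝ} (hy : ∀ i, 0 ≤ y i ∧ y i ≤ 1)
    (hf : ∀ S, 0 ≤ f S) : 0 ≤ multilinearExt f y :=
  sum_nonneg fun S _ => mul_nonneg (indepProb_nonneg hy S) (hf S)

lemma sum_eq_sum_powerset_erase_add_insert {β : Type*} [AddCommMonoid β]
    (g : Finset V → β) (i : V) :
    ∑ S, g S = ∑ S ∈ (univ.erase i).powerset, (g S + g (insert i S)) := by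
  have h := sum_powerset_insert (notMem_erase i univ) g
  rwa [insert_erase (mem_univ i), powerset_univ, ← sum_add_distrib] at h

/-- Pairing `S ∌ i` with `insert i S`, both sides become
`∑ S ∌ i, indepProbErase y i S * (f (insert i S) - f S)`. -/
lemma sum_indepProbErase_mul_ite (f : Finset V → ℝ) (y : V → ℝ) (i : V) :
    ∑ S, indepProbErase y i S * (if i ∈ S then f S else -f S)
      = multilinearExtPartial f y i := by
  rw [multilinearExtPartial, sum_eq_sum_powerset_erase_add_insert _ i,
    sum_eq_sum_powerset_erase_add_insert _ i]
  refine sum_congr rfl fun S hS => ?_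
  have hi : i ∉ S := fun h => by simpa using mem_powerset.1 hS h
  rw [indepProb_eq_mul_indepProbErase y i, indepProb_eq_mul_indepProbErase y i,
    indepProbErase_insert, insert_eq_of_mem (mem_insert_self i S), erase_insert hi,
    erase_eq_of_notMem hi]
  simp only [hi, mem_insert_self, if_true, if_false]
  ring

lemma hasDerivAt_indepProb_line (y d : V → ℝ) (S : Finset V) (t : ℝ) :
    HasDerivAt (fun s => indepProb (y + s • d) S)
      (∑ i, indepProbErase (y + t • d) i S * (if i ∈ S then d i else -d i)) t := by
  have hcoord : ∀ j, HasDerivAt (fun s : ℝ => (y + s • d) j) (d j) t := fun j => by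
    simpa using ((hasDerivAt_id t).mul_const (d j)).const_add (y j)
  have hfactor : ∀ j ∈ (univ : Finset V), HasDerivAt
      (fun s => if j ∈ S then (y + s • d) j else 1 - (y + s • d) j)
      (if j ∈ S then d j else -d j) t := fun j _ => by
    split_ifs
    · exact hcoord j
    · exact (hcoord j).const_sub 1
  simpa only [indepProb, indepProbErase, smul_eq_mul] using HasDerivAt.fun_finsetProd hfactor

lemma hasDerivAt_multilinearExt_line (f : Finset V → ℝ) (y d : V → ℝ) (t : ℝ) :
    HasDerivAt (fun s => multilinearExt f (y + s • d))
      (∑ i, d i * multilinearExtPartial f (y + t • d) i) t := by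
  refine (HasDerivAt.fun_sum fun S (_ : S ∈ univ) =>
    (hasDerivAt_indepProb_line y d S t).mul_const (f S)).congr_deriv ?_
  simp only [← sum_indepProbErase_mul_ite, mul_sum, sum_mul]
  rw [sum_comm]
  refine sum_congr rfl fun S _ => sum_congr rfl fun i _ => ?_
  split_ifs <;> ring

end MultilinearExtension

section Submodular

variable {V : Type*} [DecidableEq V]

def IsSubmodular (f : Finset V → ℝ) : Prop :=
  ∀ T S : Finset V, T ⊆ S → ∀ i : V, f (insert i S) - f S ≤ f (insert i T) - f T

lemma IsSubmodular.le_add_sum_insert_sub {f : Finset V → ℝ} (hsub : IsSubmodular f)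
    (S U : Finset V) : f (S ∪ U) ≤ f S + ∑ i ∈ U, (f (insert i S) - f S) := by
  induction U using Finset.induction_on with
  | empty => simp
  | insert a U ha ih =>
    rw [union_insert, sum_insert ha]
    linarith [hsub S (S ∪ U) subset_union_left a]

lemma IsSubmodular.le_add_sum_insert_sub_erase {f : Finset V → ℝ} (hmono : Monotone f)
    (hsub : IsSubmodular f) (S T : Finset V) :
    f T ≤ f S + ∑ i ∈ T, (f (insert i S) - f (S.erase i)) :=
  calc f T ≤ f (S ∪ T) := hmono subset_union_right
    _ ≤ f S + ∑ i ∈ T, (f (insert i S) - f S) := hsub.le_add_sum_insert_sub S T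
    _ ≤ f S + ∑ i ∈ T, (f (insert i S) - f (S.erase i)) := by
      gcongr with i
      exact hmono (erase_subset i S)

end Submodular

section CorrelationGap

variable {V : Type*} [Fintype V] [DecidableEq V]

lemma IsSubmodular.le_multilinearExt_add_sum_partial {f : Finset V → ℝ} (hmono : Monotone f)
    (hsub : IsSubmodular f) {y : V → ℝ} (hy : ∀ i, 0 ≤ y i ∧ y i ≤ 1) (T : Finset V) :
    f T ≤ multilinearExt f y + ∑ i ∈ T, multilinearExtPartial f y i :=
  calc f T = ∑ S, indepProb y S * f T := by rw [← sum_mul, sum_indepProb, one_mul]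
    _ ≤ ∑ S, indepProb y S * (f S + ∑ i ∈ T, (f (insert i S) - f (S.erase i))) :=
      sum_le_sum fun S _ => mul_le_mul_of_nonneg_left
        (hsub.le_add_sum_insert_sub_erase hmono S T) (indepProb_nonneg hy S)
    _ = multilinearExt f y + ∑ i ∈ T, multilinearExtPartial f y i := by
      simp only [mul_add, sum_add_distrib, multilinearExt, multilinearExtPartial, mul_sum]
      rw [sum_comm (s := univ)]

lemma IsSubmodular.expVal_le_multilinearExt_add {f : Finset V → ℝ} (hmono : Monotone f)
    (hsub : IsSubmodular f) {p : V → ℝ} {α : Finset V → ℝ} (hα : IsDistWithMarginals p α)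
    {y : V → ℝ} (hy : ∀ i, 0 ≤ y i ∧ y i ≤ 1) :
    expVal α f ≤ multilinearExt f y + ∑ i, p i * multilinearExtPartial f y i := by
  obtain ⟨hα_nonneg, hα_sum, hα_marginal⟩ := hα
  have hswap : ∑ T, α T * ∑ i ∈ T, multilinearExtPartial f y i
      = ∑ i, p i * multilinearExtPartial f y i := by
    simp only [mul_sum, ← hα_marginal, sum_mul]
    exact sum_comm' fun T i => by simp
  calc expVal α f
      ≤ ∑ T, α T * (multilinearExt f y + ∑ i ∈ T, multilinearExtPartial f y i) :=
        sum_le_sum fun T _ => mul_le_mul_of_nonneg_left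
          (hsub.le_multilinearExt_add_sum_partial hmono hy T) (hα_nonneg T)
    _ = multilinearExt f y + ∑ i, p i * multilinearExtPartial f y i := by
      simp only [mul_add, sum_add_distrib, hswap]
      rw [← sum_mul, hα_sum, one_mul]

lemma IsSubmodular.expVal_le_mul_multilinearExt {f : Finset V → ℝ} (hmono : Monotone f)
    (hf0 : f ∅ = 0) (hsub : IsSubmodular f) {p : V → ℝ} (hp : ∀ i, 0 ≤ p i ∧ p i ≤ 1)
    {α : Finset V → ℝ} (hα : IsDistWithMarginals p α) :
    expVal α f ≤ Real.exp 1 / (Real.exp 1 - 1) * multilinearExt f p := by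
  set c := expVal α f
  set g : ℝ → ℝ := fun t => multilinearExt f (t • p)
  have hderiv : ∀ t ∈ Set.Icc (0 : ℝ) 1,
      HasDerivAt g (∑ i, p i * multilinearExtPartial f (t • p) i) t := fun t _ => by
    simpa only [zero_add] using hasDerivAt_multilinearExt_line f 0 p t
  have hstep : ∀ t ∈ Set.Icc (0 : ℝ) 1,
      c ≤ g t + ∑ i, p i * multilinearExtPartial f (t • p) i := fun t ht =>
    hsub.expVal_le_multilinearExt_add hmono hα fun i =>
      ⟨mul_nonneg ht.1 (hp i).1, mul_le_one₀ ht.2 (hp i).1 (hp i).2⟩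
  have hends : Real.exp 0 * (g 0 - c) ≤ Real.exp 1 * (g 1 - c) :=
    monotoneOn_exp_mul_sub_of_le_add_deriv hderiv hstep
      (Set.left_mem_Icc.2 zero_le_one) (Set.right_mem_Icc.2 zero_le_one) zero_le_one
  have hg0 : g 0 = 0 := by simp [g, multilinearExt_zero, hf0]
  have hg1 : g 1 = multilinearExt f p := by simp [g]
  rw [hg0, hg1, Real.exp_zero] at hends
  have he : 1 < Real.exp 1 := Real.one_lt_exp_iff.2 one_pos
  rw [div_mul_eq_mul_div, le_div_iff₀ (sub_pos.2 he)]
  linarith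

end CorrelationGap

/-- Corollary 2: for a non-decreasing submodular cost function with `f ∅ = 0`,
the correlation gap is bounded by `e/(e-1)`. -/
theorem correlation_gap_submodular
    {V : Type*} [Fintype V] [DecidableEq V]
    (p : V → ℝ) (hp : ∀ i, 0 ≤ p i ∧ p i ≤ 1)
    (f : Finset V → ℝ)
    (hmono : ∀ S T : Finset V, S ⊆ T → f S ≤ f T)
    (hf0 : f ∅ = 0)
    (hsub : ∀ T S : Finset V, T ⊆ S → ∀ i : V,
      f (insert i S) - f S ≤ f (insert i T) - f T) :
    worstVal p f ≤ (Real.exp 1 / (Real.exp 1 - 1)) * indepVal p f := by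
  have hmono' : Monotone f := fun S T h => hmono S T h
  rw [indepVal_eq_multilinearExt]
  refine Real.sSup_le ?_ ?_
  · rintro _ ⟨α, hα, rfl⟩
    exact IsSubmodular.expVal_le_mul_multilinearExt hmono' hf0 hsub hp hα
  · have he : 1 < Real.exp 1 := Real.one_lt_exp_iff.2 one_pos
    refine mul_nonneg (div_nonneg (Real.exp_pos 1).le (sub_pos.2 he).le) ?_
    exact multilinearExt_nonneg hp fun S => hf0 ▸ hmono' (empty_subset S)
end

section
/- Let (f,V,{p_i}) be an instance with f : 2^V → ℝ non-decreasing, and let (f',V',{p'_j}) be its split by positive integers {n_i : i ∈ V}. Then splitting does not change the worst-case expected value: L(f,V,{p_i}) = L(f',V',{p'_j}). -/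
open Finset

variable {W : Type*} [Fintype W] [DecidableEq W]

/-!
A distribution `α` on `V` with marginals `p` is turned into one on the copies by drawing
`S ∼ α` and keeping one uniformly random copy of each element of `S`: every copy of `i` then has
marginal `p i / n i`, and `Π` recovers `S`, so the expected value is unchanged.

Conversely, projecting a distribution on the copies by `Π` gives a distribution on `V` whose
marginals `q i` are at most `p i` by the union bound over the copies of `i`. Taking the union
with an independent random set containing `i` with probability `r i`, where
`(1 - q i) * (1 - r i) = 1 - p i`, raises the marginals to exactly `p`, and since `f` is
non-decreasing this does not decrease the expected value.
-/

lemma IsDistWithMarginals.sum_filter_notMem {p : W → ℝ} {α : Finset W → ℝ}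
    (hα : IsDistWithMarginals p α) (i : W) : ∑ S with i ∉ S, α S = 1 - p i := by
  rw [← hα.2.1, ← hα.2.2 i, ← sum_filter_add_sum_filter_not univ (i ∈ ·), add_sub_cancel_left]

lemma sum_filter_fst_and_snd_mul {X Y : Type*} [Fintype X] [Fintype Y] (P : X → Prop)
    (Q : Y → Prop) [DecidablePred P] [DecidablePred Q] (a : X → ℝ) (b : Y → ℝ) :
    ∑ x : X × Y with P x.1 ∧ Q x.2, a x.1 * b x.2 = (∑ x with P x, a x) * ∑ y with Q y, b y := by
  rw [sum_mul_sum, ← sum_product', ← filter_product, univ_product_univ]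

section Pushforward

variable {X : Type*} [Fintype X]

noncomputable def pushforward (μ : X → ℝ) (m : X → Finset W) (T : Finset W) : ℝ :=
  ∑ x with m x = T, μ x

lemma isDistWithMarginals_pushforward {μ : X → ℝ} {m : X → Finset W} {p : W → ℝ}
    (hμ : ∀ x, 0 ≤ μ x) (hμ1 : ∑ x, μ x = 1) (hm : ∀ i, ∑ x with i ∈ m x, μ x = p i) :
    IsDistWithMarginals p (pushforward μ m) := by
  refine ⟨fun T => sum_nonneg fun x _ => hμ x, ?_, fun i => ?_⟩
  · rw [← hμ1]
    exact sum_fiberwise _ _ _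
  · rw [← hm i]
    simp only [pushforward, sum_fiberwise_eq_sum_filter, mem_filter, mem_univ, true_and]

lemma expVal_pushforward (μ : X → ℝ) (m : X → Finset W) (f : Finset W → ℝ) :
    expVal (pushforward μ m) f = ∑ x, μ x * f (m x) := by
  simp only [expVal, pushforward, sum_mul]
  rw [← sum_fiberwise univ m (fun x => μ x * f (m x))]
  refine sum_congr rfl fun T _ => sum_congr rfl fun x hx => ?_
  rw [(mem_filter.1 hx).2]

end Pushforward

noncomputable def indepDist (r : W → ℝ) (S : Finset W) : ℝ :=
  (∏ i ∈ S, r i) * ∏ i ∈ Sᶜ, (1 - r i)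

lemma isDistWithMarginals_indepDist {r : W → ℝ} (hr : ∀ i, 0 ≤ r i ∧ r i ≤ 1) :
    IsDistWithMarginals r (indepDist r) := by
  refine ⟨fun S => mul_nonneg (prod_nonneg fun i _ => (hr i).1)
    (prod_nonneg fun i _ => sub_nonneg.2 (hr i).2), ?_, fun i => ?_⟩
  · simp [indepDist, ← Fintype.prod_add]
  -- Setting the factor `1 - r i` to `0` kills exactly the sets avoiding `i`.
  have hterm : ∀ S : Finset W, (if i ∈ S then indepDist r S else 0)
      = (∏ j ∈ S, r j) * ∏ j ∈ Sᶜ, Function.update (fun j => 1 - r j) i 0 j := by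
    intro S
    by_cases hi : i ∈ S
    · rw [if_pos hi, indepDist]
      congr 1
      refine prod_congr rfl fun j hj => ?_
      rw [Function.update_of_ne (ne_of_mem_of_not_mem hi (mem_compl.1 hj)).symm]
    · rw [if_neg hi, prod_eq_zero (mem_compl.2 hi) (Function.update_self ..), mul_zero]
  rw [sum_filter, Fintype.sum_congr _ _ hterm, ← Fintype.prod_add,
    ← mul_prod_erase univ _ (mem_univ i), Function.update_self, add_zero,
    prod_eq_one fun j hj => by simp [Function.update_of_ne (ne_of_mem_erase hj)], mul_one]

lemma isDistWithMarginals_union {q r : W → ℝ} {β γ : Finset W → ℝ}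
    (hβ : IsDistWithMarginals q β) (hγ : IsDistWithMarginals r γ) :
    IsDistWithMarginals (fun i => 1 - (1 - q i) * (1 - r i))
      (pushforward (fun x : Finset W × Finset W => β x.1 * γ x.2) fun x => x.1 ∪ x.2) := by
  have htot : ∑ x : Finset W × Finset W, β x.1 * γ x.2 = 1 := by
    simp only [Fintype.sum_prod_type, ← mul_sum, hγ.2.1, mul_one, hβ.2.1]
  refine isDistWithMarginals_pushforward (fun x => mul_nonneg (hβ.1 _) (hγ.1 _)) htot fun i => ?_
  rw [← hβ.sum_filter_notMem, ← hγ.sum_filter_notMem, ← sum_filter_fst_and_snd_mul,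
    eq_sub_iff_add_eq, ← htot, ← sum_filter_add_sum_filter_not univ (fun x => i ∈ x.1 ∪ x.2)]
  simp only [mem_union, not_or]

section WorstVal

variable {p : W → ℝ} {f : Finset W → ℝ}

lemma bddAbove_expVal_set :
    BddAbove {v | ∃ α, IsDistWithMarginals p α ∧ v = expVal α f} := by
  refine ⟨univ.sup' univ_nonempty f, ?_⟩
  rintro _ ⟨α, hα, rfl⟩
  calc expVal α f ≤ ∑ S, α S * univ.sup' univ_nonempty f :=
        sum_le_sum fun S _ => mul_le_mul_of_nonneg_left (le_sup' f (mem_univ S)) (hα.1 S)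
    _ = univ.sup' univ_nonempty f := by rw [← sum_mul, hα.2.1, one_mul]

lemma le_worstVal {α : Finset W → ℝ} (hα : IsDistWithMarginals p α) :
    expVal α f ≤ worstVal p f :=
  le_csSup bddAbove_expVal_set ⟨α, hα, rfl⟩

lemma worstVal_le {b : ℝ} (hp : ∀ i, 0 ≤ p i ∧ p i ≤ 1)
    (h : ∀ α, IsDistWithMarginals p α → expVal α f ≤ b) : worstVal p f ≤ b :=
  csSup_le ⟨_, indepDist p, isDistWithMarginals_indepDist hp, rfl⟩
    fun _ ⟨α, hα, hv⟩ => hv ▸ h α hα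

lemma expVal_le_worstVal_of_le (hf : Monotone f) {q : W → ℝ} {β : Finset W → ℝ}
    (hβ : IsDistWithMarginals q β) (hqp : ∀ i, q i ≤ p i) (hp : ∀ i, p i ≤ 1) :
    expVal β f ≤ worstVal p f := by
  -- Chosen so that `(1 - q i) * (1 - r i) = 1 - p i`; at `q i = 1`, which forces `p i = 1`,
  -- the junk value `x / 0 = 0` gives `r i = 1`.
  set r : W → ℝ := fun i => 1 - (1 - p i) / (1 - q i)
  have hr : ∀ i, 0 ≤ r i ∧ r i ≤ 1 := fun i =>
    ⟨sub_nonneg.2 (div_le_one_of_le₀ (by linarith [hqp i]) (by linarith [hqp i, hp i])),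
      sub_le_self _ (div_nonneg (by linarith [hp i]) (by linarith [hqp i, hp i]))⟩
  have hγ := isDistWithMarginals_indepDist hr
  have hpr : (fun i => 1 - (1 - q i) * (1 - r i)) = p := by
    funext i
    rcases eq_or_ne (1 - q i) 0 with hq | hq
    · rw [hq, zero_mul]
      linarith [hqp i, hp i]
    · simp only [r, sub_sub_cancel, mul_div_cancel₀ _ hq]
  have hunion := isDistWithMarginals_union hβ hγ
  rw [hpr] at hunion
  calc expVal β f = ∑ x : Finset W × Finset W, β x.1 * indepDist r x.2 * f x.1 := by
        simp only [expVal, Fintype.sum_prod_type, mul_right_comm _ _ (f _), ← mul_sum, hγ.2.1,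
          mul_one]
    _ ≤ ∑ x : Finset W × Finset W, β x.1 * indepDist r x.2 * f (x.1 ∪ x.2) :=
        sum_le_sum fun x _ => mul_le_mul_of_nonneg_left (hf subset_union_left)
          (mul_nonneg (hβ.1 _) (hγ.1 _))
    _ = expVal _ f := (expVal_pushforward _ _ f).symm
    _ ≤ worstVal p f := le_worstVal hunion

end WorstVal

lemma sum_filter_mem_image_le {W' : Type*} [DecidableEq W'] {p : W → ℝ}
    {α : Finset W → ℝ} (hα : IsDistWithMarginals p α) (π : W → W') (i : W') :
    ∑ S with i ∈ S.image π, α S ≤ ∑ j with π j = i, p j := by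
  calc ∑ S with i ∈ S.image π, α S ≤ ∑ S, ∑ j ∈ S with π j = i, α S := by
        rw [sum_filter]
        refine sum_le_sum fun S _ => ?_
        rw [sum_const, nsmul_eq_mul]
        split_ifs with hi
        · obtain ⟨j, hj, hπj⟩ := mem_image.1 hi
          have hcard : (1 : ℝ) ≤ #{j ∈ S | π j = i} :=
            Nat.one_le_cast.2 (card_pos.2 ⟨j, mem_filter.2 ⟨hj, hπj⟩⟩)
          exact le_mul_of_one_le_left (hα.1 S) hcard
        · exact mul_nonneg (Nat.cast_nonneg _) (hα.1 S)
    _ = ∑ j with π j = i, ∑ S with j ∈ S, α S :=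
        sum_comm' fun S j => by simp only [mem_univ, mem_filter, true_and]
    _ = ∑ j with π j = i, p j := sum_congr rfl fun j _ => hα.2.2 j

lemma card_filter_apply_eq_mul_card {ι : Type*} [Fintype ι] [DecidableEq ι] {κ : ι → Type*}
    [∀ i, Fintype (κ i)] [∀ i, DecidableEq (κ i)] (i : ι) (a : κ i) :
    #{g : ∀ j, κ j | g i = a} * Fintype.card (κ i) = Fintype.card (∀ j, κ j) := by
  have h := Fintype.card_filter_piFinset_eq_of_mem (fun j => (univ : Finset (κ j))) i (mem_univ a)
  rw [Fintype.piFinset_univ] at h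
  rw [h, Fintype.card_pi, ← mul_prod_erase univ _ (mem_univ i), mul_comm]
  simp only [card_univ]

lemma image_fst_sigma_singleton {ι : Type*} [DecidableEq ι] {κ : ι → Type*} (S : Finset ι)
    (g : ∀ i, κ i) : (S.sigma fun i => {g i}).image Sigma.fst = S := by
  ext; simp

section Split

variable {n : W → ℕ}

lemma sum_filter_fst_div_eq (p : W → ℝ) {i : W} (hi : n i ≠ 0) :
    ∑ j : Σ i, Fin (n i) with j.1 = i, p j.1 / n j.1 = p i := by
  rw [sum_filter, Fintype.sum_sigma]
  rw [Fintype.sum_eq_single i fun t ht => by simp [ht]]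
  simp only [↓reduceIte, sum_const, card_univ, Fintype.card_fin, nsmul_eq_mul]
  exact mul_div_cancel₀ _ (Nat.cast_ne_zero.2 hi)

lemma cast_card_pi_fin_pos (hn : ∀ i, 1 ≤ n i) : (0 : ℝ) < Fintype.card (∀ i, Fin (n i)) :=
  have : ∀ i, Nonempty (Fin (n i)) := fun i => ⟨⟨0, hn i⟩⟩
  Nat.cast_pos.2 Fintype.card_pos

/-- Draw `S ∼ α` and, independently, a uniformly random copy `g i` of every `i`; keep the copies
`⟨i, g i⟩` with `i ∈ S`. -/
noncomputable def splitDist (n : W → ℕ) (α : Finset W → ℝ) : Finset (Σ i, Fin (n i)) → ℝ :=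
  pushforward (fun x : Finset W × (∀ i, Fin (n i)) => α x.1 / Fintype.card (∀ i, Fin (n i)))
    fun x : Finset W × (∀ i, Fin (n i)) => x.1.sigma fun i => {x.2 i}

lemma isDistWithMarginals_splitDist (hn : ∀ i, 1 ≤ n i) {p : W → ℝ} {α : Finset W → ℝ}
    (hα : IsDistWithMarginals p α) :
    IsDistWithMarginals (fun j : Σ i, Fin (n i) => p j.1 / n j.1) (splitDist n α) := by
  have hN := cast_card_pi_fin_pos hn
  refine isDistWithMarginals_pushforward (fun x => div_nonneg (hα.1 _) hN.le) ?_ ?_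
  · simp only [Fintype.sum_prod_type, sum_const, card_univ, nsmul_eq_mul,
      mul_div_cancel₀ _ hN.ne', hα.2.1]
  rintro ⟨i, k⟩
  have hcount : (#{g : ∀ i, Fin (n i) | g i = k} : ℝ) * n i
      = Fintype.card (∀ i, Fin (n i)) := by
    have h := card_filter_apply_eq_mul_card (κ := fun i => Fin (n i)) i k
    rw [Fintype.card_fin] at h
    exact_mod_cast h
  obtain ⟨hcard, hni⟩ := mul_ne_zero_iff.1 (hcount ▸ hN.ne')
  calc ∑ x ∈ univ with (⟨i, k⟩ : Σ i, Fin (n i)) ∈ x.1.sigma fun i => {x.2 i},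
        α x.1 / Fintype.card (∀ i, Fin (n i))
      = ∑ x : Finset W × (∀ i, Fin (n i)) with i ∈ x.1 ∧ x.2 i = k,
          α x.1 * (Fintype.card (∀ i, Fin (n i)) : ℝ)⁻¹ :=
        sum_congr (filter_congr fun x _ => by simp [eq_comm]) fun x _ => div_eq_mul_inv _ _
    _ = p i * (#{g : ∀ i, Fin (n i) | g i = k} * (Fintype.card (∀ i, Fin (n i)) : ℝ)⁻¹) := by
        rw [sum_filter_fst_and_snd_mul (i ∈ ·) (fun g : ∀ i, Fin (n i) => g i = k) α
            fun _ => (Fintype.card (∀ i, Fin (n i)) : ℝ)⁻¹, hα.2.2 i, sum_const, nsmul_eq_mul]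
    _ = p i / n i := by
        rw [← hcount]
        field_simp

lemma expVal_splitDist (hn : ∀ i, 1 ≤ n i) (α : Finset W → ℝ) (f : Finset W → ℝ) :
    expVal (splitDist n α) (fun S' => f (S'.image Sigma.fst)) = expVal α f := by
  have hN := (cast_card_pi_fin_pos hn).ne'
  rw [splitDist, expVal_pushforward, expVal]
  simp only [image_fst_sigma_singleton, Fintype.sum_prod_type, sum_const, card_univ, nsmul_eq_mul]
  exact sum_congr rfl fun S _ => by field_simp

end Split

/-- Property 2: splitting each element `i` into `n i` copies (each copy getting marginal
probability `p i / n i`, and the new cost function being `f ∘ Π`, where `Π` maps a set of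
copies to the set of original elements having at least one copy in it) does not change the
worst-case expected value. -/
theorem split_preserves_worst_case
    {V : Type*} [Fintype V] [DecidableEq V]
    (p : V → ℝ) (hp : ∀ i, 0 ≤ p i ∧ p i ≤ 1)
    (f : Finset V → ℝ)
    (hmono : ∀ S T : Finset V, S ⊆ T → f S ≤ f T)
    (n : V → ℕ) (hn : ∀ i, 1 ≤ n i) :
    worstVal p f
      = worstVal (fun j : (Σ i : V, Fin (n i)) => p j.1 / (n j.1 : ℝ))
          (fun S' : Finset (Σ i : V, Fin (n i)) => f (S'.image Sigma.fst)) := by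
  have hp' : ∀ j : Σ i, Fin (n i), 0 ≤ p j.1 / n j.1 ∧ p j.1 / n j.1 ≤ 1 := fun j =>
    ⟨div_nonneg (hp j.1).1 (Nat.cast_nonneg _),
      div_le_one_of_le₀ ((hp j.1).2.trans (Nat.one_le_cast.2 (hn j.1))) (Nat.cast_nonneg _)⟩
  apply le_antisymm
  · refine worstVal_le hp fun α hα => ?_
    rw [← expVal_splitDist hn α f]
    exact le_worstVal (isDistWithMarginals_splitDist hn hα)
  · refine worstVal_le hp' fun α' hα' => ?_
    have hproj := isDistWithMarginals_pushforward (m := image Sigma.fst) hα'.1 hα'.2.1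
      fun _ => rfl
    have hqp i : ∑ S' with i ∈ S'.image Sigma.fst, α' S' ≤ p i :=
      (sum_filter_mem_image_le hα' Sigma.fst i).trans_eq
        (sum_filter_fst_div_eq p (Nat.one_le_iff_ne_zero.1 (hn i)))
    calc expVal α' _ = expVal (pushforward α' (image Sigma.fst)) f :=
          (expVal_pushforward _ _ f).symm
      _ ≤ worstVal p f :=
          expVal_le_worstVal_of_le (fun _ _ => hmono _ _) hproj hqp fun i => (hp i).2
end

section
/- Let (f,V,{p_i}) be an instance with f : 2^V → ℝ non-decreasing, and let (f',V',{p'_j}) be its split by positive integers {n_i : i ∈ V}. Then splitting can only decrease the expected value under the independent distribution: I(f',V',{p'_j}) ≤ I(f,V,{p_i}). -/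
open Finset

variable {W : Type*} [Fintype W] [DecidableEq W]

/-! Projecting a set of copies to `V` turns the split instance into the original one with
marginals `q i = 1 - (1 - p i / n i) ^ n i`, the probability that at least one copy of `i` is
present, and `q i ≤ p i` by Bernoulli's inequality. The independent value of a monotone `f` is
affine in each marginal with slope `E[f (insert i S) - f S] ≥ 0`, so lowering marginals from `p`
to `q` lowers it. -/

def indepWeight (p : W → ℝ) (S : Finset W) : ℝ :=
  (∏ i ∈ S, p i) * ∏ i ∈ Sᶜ, (1 - p i)

theorem indepVal_eq_sum_indepWeight (p : W → ℝ) (f : Finset W → ℝ) :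
    indepVal p f = ∑ S, indepWeight p S * f S :=
  rfl

theorem indepWeight_nonneg {p : W → ℝ} (hp : ∀ i, 0 ≤ p i ∧ p i ≤ 1) (S : Finset W) :
    0 ≤ indepWeight p S :=
  mul_nonneg (prod_nonneg fun i _ => (hp i).1) (prod_nonneg fun i _ => sub_nonneg.2 (hp i).2)

theorem sum_indepWeight (p : W → ℝ) : ∑ S, indepWeight p S = 1 := by
  simp [indepWeight, ← Fintype.prod_add]

theorem indepWeight_empty (p : W → ℝ) : indepWeight p ∅ = ∏ i, (1 - p i) := by
  simp [indepWeight]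

theorem sum_indepWeight_nonempty (p : W → ℝ) :
    ∑ S with S.Nonempty, indepWeight p S = 1 - ∏ i, (1 - p i) := by
  rw [← indepWeight_empty, eq_sub_iff_add_eq, ← sum_indepWeight p,
    ← sum_filter_add_sum_filter_not univ Finset.Nonempty]
  simp [Finset.not_nonempty_iff_eq_empty, filter_eq']

theorem indepWeight_eq_prod_ite (p : W → ℝ) (S : Finset W) :
    indepWeight p S = ∏ i, if i ∈ S then p i else 1 - p i := by
  rw [prod_ite]
  simp [indepWeight, Finset.compl_eq_univ_sdiff, Finset.filter_not]

section Update

variable (r : W → ℝ) {i : W} {S : Finset W}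

theorem indepWeight_update (t : ℝ) :
    indepWeight (Function.update r i t) S =
      (if i ∈ S then t else 1 - t) * ∏ j ∈ univ.erase i, if j ∈ S then r j else 1 - r j := by
  rw [indepWeight_eq_prod_ite, ← mul_prod_erase univ _ (mem_univ i), Function.update_self]
  congr 1
  refine prod_congr rfl fun j hj => ?_
  rw [Function.update_of_ne (ne_of_mem_erase hj)]

theorem indepWeight_update_of_notMem (t : ℝ) (hi : i ∉ S) :
    indepWeight (Function.update r i t) S = (1 - t) * indepWeight (Function.update r i 0) S := by
  rw [indepWeight_update, indepWeight_update, if_neg hi, if_neg hi, sub_zero, one_mul]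

theorem indepWeight_update_insert (t : ℝ) (hi : i ∉ S) :
    indepWeight (Function.update r i t) (insert i S) =
      t * indepWeight (Function.update r i 0) S := by
  rw [indepWeight_update, indepWeight_update, if_pos (mem_insert_self i S), if_neg hi, sub_zero,
    one_mul]
  congr 1
  refine prod_congr rfl fun j hj => ?_
  simp [ne_of_mem_erase hj]

theorem indepVal_update (f : Finset W → ℝ) (t : ℝ) :
    indepVal (Function.update r i t) f = ∑ S ∈ (univ.erase i).powerset,
      indepWeight (Function.update r i 0) S * (t * f (insert i S) + (1 - t) * f S) := by
  have split := sum_powerset_insert (notMem_erase i univ)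
    fun S => indepWeight (Function.update r i t) S * f S
  rw [insert_erase (mem_univ i), powerset_univ] at split
  rw [indepVal_eq_sum_indepWeight, split, ← sum_add_distrib]
  refine sum_congr rfl fun S hS => ?_
  have hi : i ∉ S := fun h => notMem_erase i univ (mem_powerset.1 hS h)
  rw [indepWeight_update_of_notMem r t hi, indepWeight_update_insert r t hi]
  ring

theorem indepVal_update_mono (hr : ∀ j, 0 ≤ r j ∧ r j ≤ 1) {f : Finset W → ℝ} (hf : Monotone f)
    {c d : ℝ} (hcd : c ≤ d) :
    indepVal (Function.update r i c) f ≤ indepVal (Function.update r i d) f := by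
  rw [indepVal_update, indepVal_update]
  refine sum_le_sum fun S _ => mul_le_mul_of_nonneg_left ?_ (indepWeight_nonneg ?_ S)
  · nlinarith [hf (subset_insert i S)]
  · intro j
    rcases eq_or_ne j i with rfl | hj
    · simp
    · simpa [Function.update_of_ne hj] using hr j

end Update

theorem indepVal_mono {p q : W → ℝ} (hq : ∀ i, 0 ≤ q i) (hp : ∀ i, p i ≤ 1) (hqp : q ≤ p)
    {f : Finset W → ℝ} (hf : Monotone f) : indepVal q f ≤ indepVal p f := by
  suffices ∀ s : Finset W, indepVal q f ≤ indepVal (s.piecewise p q) f by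
    simpa using this univ
  intro s
  induction s using Finset.induction_on with
  | empty => simp
  | @insert a s ha ih =>
    have hr : ∀ j, 0 ≤ s.piecewise p q j ∧ s.piecewise p q j ≤ 1 := fun j => by
      by_cases hj : j ∈ s <;> simp [hj, hq j, hp j, (hq j).trans (hqp j), (hqp j).trans (hp j)]
    calc indepVal q f ≤ indepVal (s.piecewise p q) f := ih
      _ = indepVal (Function.update (s.piecewise p q) a (q a)) f := by
        rw [← piecewise_eq_of_notMem s p q ha, Function.update_eq_self]
      _ ≤ indepVal ((insert a s).piecewise p q) f := by
        rw [piecewise_insert]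
        exact indepVal_update_mono _ hr hf (hqp a)

section Sigma

variable {ι : Type*} [Fintype ι] [DecidableEq ι] {κ : ι → Type*}

theorem image_fst_univ_sigma (g : ∀ i, Finset (κ i)) :
    (univ.sigma g).image Sigma.fst = ({i | (g i).Nonempty} : Finset ι) := by
  ext i
  simp only [mem_image, mem_sigma, mem_univ, true_and, mem_filter]
  exact ⟨fun ⟨x, hx, h⟩ => h ▸ ⟨x.2, hx⟩, fun ⟨a, ha⟩ => ⟨⟨i, a⟩, ha, rfl⟩⟩

variable [∀ i, Fintype (κ i)] [∀ i, DecidableEq (κ i)]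

theorem compl_univ_sigma (g : ∀ i, Finset (κ i)) :
    (univ.sigma g)ᶜ = univ.sigma fun i => (g i)ᶜ := by
  ext ⟨i, a⟩
  simp

theorem indepWeight_univ_sigma (r : (Σ i, κ i) → ℝ) (g : ∀ i, Finset (κ i)) :
    indepWeight r (univ.sigma g) = ∏ i, indepWeight (fun a => r ⟨i, a⟩) (g i) := by
  simp only [indepWeight, compl_univ_sigma, prod_sigma, ← prod_mul_distrib]

theorem bijective_univ_sigma : Function.Bijective fun g : (∀ i, Finset (κ i)) => univ.sigma g := by
  refine ⟨fun g₁ g₂ h => funext fun i => ?_, fun S => ⟨fun i => {a | ⟨i, a⟩ ∈ S}, ?_⟩⟩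
  · ext a
    simpa using congrArg (⟨i, a⟩ ∈ ·) h
  · ext ⟨i, a⟩
    simp

theorem indepVal_eq_sum_pi (r : (Σ i, κ i) → ℝ) (F : Finset (Σ i, κ i) → ℝ) :
    indepVal r F = ∑ g : ∀ i, Finset (κ i),
      (∏ i, indepWeight (fun a => r ⟨i, a⟩) (g i)) * F (univ.sigma g) := by
  rw [indepVal_eq_sum_indepWeight]
  refine (Fintype.sum_bijective _ bijective_univ_sigma _ _ fun g => ?_).symm
  rw [indepWeight_univ_sigma]

theorem sum_prod_indepWeight_of_support_eq (r : (Σ i, κ i) → ℝ) (T : Finset ι) :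
    ∑ g : ∀ i, Finset (κ i) with ({i | (g i).Nonempty} : Finset ι) = T,
        ∏ i, indepWeight (fun a => r ⟨i, a⟩) (g i) =
      indepWeight (fun i => 1 - ∏ a, (1 - r ⟨i, a⟩)) T := by
  have fiber : ({g : ∀ i, Finset (κ i) | ({i | (g i).Nonempty} : Finset ι) = T} : Finset _) =
      Fintype.piFinset fun i => {s | s.Nonempty ↔ i ∈ T} := by
    ext g
    simp [Finset.ext_iff]
  rw [fiber, ← prod_univ_sum, indepWeight_eq_prod_ite]
  refine prod_congr rfl fun i _ => ?_
  by_cases hi : i ∈ T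
  · simp [hi, sum_indepWeight_nonempty]
  · simp [hi, Finset.not_nonempty_iff_eq_empty, filter_eq', indepWeight_empty]

theorem indepVal_comp_image_fst (r : (Σ i, κ i) → ℝ) (f : Finset ι → ℝ) :
    indepVal r (fun S => f (S.image Sigma.fst)) =
      indepVal (fun i => 1 - ∏ a, (1 - r ⟨i, a⟩)) f := by
  rw [indepVal_eq_sum_pi, indepVal_eq_sum_indepWeight,
    ← sum_fiberwise univ fun g : ∀ i, Finset (κ i) => ({i | (g i).Nonempty} : Finset ι)]
  refine sum_congr rfl fun T _ => ?_
  rw [← sum_prod_indepWeight_of_support_eq, sum_mul]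
  refine sum_congr rfl fun g hg => ?_
  rw [image_fst_univ_sigma, (mem_filter.1 hg).2]

end Sigma

theorem one_sub_div_pow_mem_Icc {x : ℝ} (hx₀ : 0 ≤ x) (hx₁ : x ≤ 1) (n : ℕ) :
    (1 - x / n) ^ n ∈ Set.Icc (1 - x) 1 := by
  rcases n.eq_zero_or_pos with rfl | hn
  · simpa using hx₀
  have hxn₀ : 0 ≤ x / n := div_nonneg hx₀ n.cast_nonneg
  have hxn₁ : x / n ≤ 1 := div_le_one_of_le₀ (hx₁.trans (Nat.one_le_cast.2 hn)) n.cast_nonneg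
  refine ⟨?_, pow_le_one₀ (sub_nonneg.2 hxn₁) (sub_le_self _ hxn₀)⟩
  calc 1 - x = 1 + n * -(x / n) := by field_simp; ring
    _ ≤ (1 + -(x / n)) ^ n := one_add_mul_le_pow (by linarith) n
    _ = (1 - x / n) ^ n := by ring

theorem split_decreases_independent_value_general
    {V : Type*} [Fintype V] [DecidableEq V]
    (p : V → ℝ) (hp : ∀ i, 0 ≤ p i ∧ p i ≤ 1)
    (f : Finset V → ℝ)
    (hmono : ∀ S T : Finset V, S ⊆ T → f S ≤ f T)
    (n : V → ℕ) :
    indepVal (fun j : (Σ i : V, Fin (n i)) => p j.1 / (n j.1 : ℝ))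
        (fun S' : Finset (Σ i : V, Fin (n i)) => f (S'.image Sigma.fst))
      ≤ indepVal p f := by
  have bounds i := one_sub_div_pow_mem_Icc (hp i).1 (hp i).2 (n i)
  rw [indepVal_comp_image_fst]
  refine indepVal_mono (fun i => ?_) (fun i => (hp i).2) (fun i => ?_) (fun S T => hmono S T)
  · simpa only [Fin.prod_const, sub_nonneg] using (bounds i).2
  · simpa only [Fin.prod_const, sub_le_comm] using (bounds i).1

/-- Property 3: splitting each element `i` into `n i` copies (each copy getting marginal
probability `p i / n i`, and the new cost function being `f ∘ Π`, where `Π` maps a set of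
copies to the set of original elements having at least one copy in it) can only decrease
the expected value under the independent distribution. -/
theorem split_decreases_independent_value
    {V : Type*} [Fintype V] [DecidableEq V]
    (p : V → ℝ) (hp : ∀ i, 0 ≤ p i ∧ p i ≤ 1)
    (f : Finset V → ℝ)
    (hmono : ∀ S T : Finset V, S ⊆ T → f S ≤ f T)
    (n : V → ℕ) (hn : ∀ i, 1 ≤ n i) :
    indepVal (fun j : (Σ i : V, Fin (n i)) => p j.1 / (n j.1 : ℝ))
        (fun S' : Finset (Σ i : V, Fin (n i)) => f (S'.image Sigma.fst))
      ≤ indepVal p f :=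
  split_decreases_independent_value_general p hp f hmono n
end

section
/- Let (f',V',{p'_j}) be a split of an instance (f,V,{p_i}), let χ be an (η,β)-cost-sharing scheme for f, and suppose V' is partitioned into blocks A_K, A_{K−1}, ..., A_1 such that each block contains at most one copy of each original element. Define χ' by: χ'(C^i_j, S', σ'_{S'}) = χ(i, Π(S'), σ) if C^i_j is the lowest-indexed (earliest under σ'_{S'}) copy of i present in S', where σ is the ordering of Π(S') induced by the positions of lowest-indexed copies in σ'_{S'}; and χ'(C^i_j, S', σ'_{S'}) = 0 otherwise. Then: (1) χ' is β-budget balanced; (2) χ' is weakly η-summable; and (3) χ' is cross-monotone for every pair S' ⊆ T' ⊆ V' with σ'_{S'} the restriction of σ'_{T'}, provided both orderings list all elements of A_K before A_{K−1} before ... before A_1, and S' is a partial prefix of T', i.e., for some k, S' ⊆ A_K ∪ ⋯ ∪ A_k and T'∖S' ⊆ A_k ∪ ⋯ ∪ A_1. -/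
/-!
Only the earliest copy of each original element carries a share, namely the original share in
the order induced by earliest copies. Hence the total of `χ'` over `S'` is the total of `χ` over
`Π(S')`, and since every prefix of `σ'` induces a prefix of the induced order, the prefix sums of
`χ'` are those of `χ`. For cross-monotonicity, the block order and the partial-prefix condition
force `S'` to contain every copy that precedes one of its elements in `σ'_{T'}`: a copy outside
`S'` lies in a block no earlier than every block meeting `S'`, and two copies of one element never
share a block. So the earliest copies of elements of `Π(S')` are the same in `S'` and in `T'`, the
order induced by `S'` is the restriction of the one induced by `T'`, and cross-monotonicity of
`χ` applies.
-/

open Finset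

/-- The split ground set: each element `i` of `V` is replaced by `n i` copies. -/
abbrev SplitT (V : Type*) (n : V → ℕ) := Σ i : V, Fin (n i)

variable {V : Type*} [Fintype V] [DecidableEq V] {n : V → ℕ}

/-- The list of original elements whose lowest-indexed (earliest) copies appear in `l'`,
in the order of those first occurrences. -/
def firstCopies (l' : List (SplitT V n)) : List V :=
  ((l'.map Sigma.fst).reverse.dedup).reverse

/-- The cost-sharing scheme `χ'` for the split instance: the share of a copy `j` in an
ordered set `l'` is the original share `χ` of its original element `j.1` (with respect to
the induced ordering of lowest-indexed copies) if `j` is the lowest-indexed copy of `j.1`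
present in `l'`, and `0` otherwise. -/
noncomputable def splitShare (χ : List V → V → ℝ)
    (l' : List (SplitT V n)) (j : SplitT V n) : ℝ :=
  if l'.find? (fun x => x.1 = j.1) = some j then χ (firstCopies l') j.1 else 0

/-- An ordering `l'` of copies respects the block order `B 0, B 1, …, B (K-1)`
(blocks listed from `A_K` down to `A_1`) if elements of earlier blocks always occur
before elements of later blocks. -/
def RespectsBlocks {K : ℕ} (B : Fin K → Finset (SplitT V n))
    (l' : List (SplitT V n)) : Prop :=
  ∀ m m' : Fin K, m < m' → ∀ a b : SplitT V n, a ∈ B m → b ∈ B m' →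
    a ∈ l' → b ∈ l' → l'.idxOf a < l'.idxOf b

namespace List

variable {α : Type*} [DecidableEq α]

theorem reverse_dedup_reverse_append_singleton (l : List α) (a : α) :
    (l ++ [a]).reverse.dedup.reverse =
      if a ∈ l then l.reverse.dedup.reverse else l.reverse.dedup.reverse ++ [a] := by
  split_ifs with ha
  · rw [reverse_append, reverse_singleton, singleton_append, dedup_cons_of_mem (mem_reverse.2 ha)]
  · rw [reverse_append, reverse_singleton, singleton_append,
      dedup_cons_of_notMem (mt mem_reverse.1 ha), reverse_cons]

theorem idxOf_lt_idxOf_of_pair_sublist {l : List α} {a b : α} (hl : l.Nodup)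
    (h : [a, b] <+ l) : l.idxOf a < l.idxOf b := by
  obtain ⟨l₁, l₂, rfl, ha, hb⟩ := append_sublist_iff.1 (show [a] ++ [b] <+ l from h)
  have ha : a ∈ l₁ := singleton_sublist.1 ha
  have hb : b ∉ l₁ := fun hb₁ => disjoint_of_nodup_append hl hb₁ (singleton_sublist.1 hb)
  rw [idxOf_append_of_mem ha, idxOf_append_of_notMem hb]
  exact (idxOf_lt_length_iff.2 ha).trans_le (Nat.le_add_right _ _)

theorem Sublist.filter_mem_eq {l₁ l₂ : List α} (h : l₁ <+ l₂) (hl₂ : l₂.Nodup) :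
    l₂.filter (· ∈ l₁) = l₁ := by
  induction h with
  | slnil => rfl
  | @cons l₁ l₂ a h ih =>
    have ha : a ∉ l₁ := fun ha => (nodup_cons.1 hl₂).1 (h.subset ha)
    rw [filter_cons_of_neg (by simpa using ha), ih hl₂.of_cons]
  | @cons_cons l₁ l₂ a h ih =>
    have ha : a ∉ l₂ := (nodup_cons.1 hl₂).1
    rw [filter_cons_of_pos (by simp), ← ih hl₂.of_cons]
    congr 1
    refine filter_congr fun x hx => ?_
    simp [show x ≠ a from fun hxa => ha (hxa ▸ hx), hx]

end List

def prefixShareSum {α : Type*} (g : List α → α → ℝ) (l : List α) : ℝ :=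
  ∑ ℓ : Fin l.length, g (l.take (ℓ.1 + 1)) (l.get ℓ)

theorem prefixShareSum_append_singleton {α : Type*} (g : List α → α → ℝ) (l : List α)
    (a : α) :
    prefixShareSum g (l ++ [a]) = prefixShareSum g l + g (l ++ [a]) a := by
  unfold prefixShareSum
  rw [← Fin.sum_congr' _ (by simp : l.length + 1 = (l ++ [a]).length), Fin.sum_univ_castSucc]
  congr 1
  · refine Finset.sum_congr rfl fun ℓ _ => ?_
    simp [List.take_append_of_le_length (Nat.succ_le_of_lt ℓ.2)]
  · simp [List.take_of_length_le]

section SplitShare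

variable {ι : Type*} {c : ι → ℕ}

def ContainsEarlierCopies (s : Finset (SplitT ι c)) (l : List (SplitT ι c)) : Prop :=
  ∀ ⦃b j : SplitT ι c⦄, [b, j].Sublist l → b.1 = j.1 → j ∈ s → b ∈ s

theorem ContainsEarlierCopies.mono {s : Finset (SplitT ι c)} {l l₁ : List (SplitT ι c)}
    (h : ContainsEarlierCopies s l) (hl₁ : l₁.Sublist l) :
    ContainsEarlierCopies s l₁ :=
  fun _ _ hbj => h (hbj.trans hl₁)

variable [DecidableEq ι]

theorem firstCopies_append_singleton (l : List (SplitT ι c)) (a : SplitT ι c) :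
    firstCopies (l ++ [a]) =
      if a.1 ∈ l.map Sigma.fst then firstCopies l else firstCopies l ++ [a.1] := by
  rw [firstCopies, List.map_append, List.map_singleton,
    List.reverse_dedup_reverse_append_singleton, firstCopies]

theorem toFinset_firstCopies (l : List (SplitT ι c)) :
    (firstCopies l).toFinset = l.toFinset.image Sigma.fst := by
  ext
  simp [firstCopies]

theorem nodup_firstCopies (l : List (SplitT ι c)) : (firstCopies l).Nodup :=
  List.nodup_reverse.2 (List.nodup_dedup _)

theorem firstCopies_ne_nil {l : List (SplitT ι c)} (h : l ≠ []) : firstCopies l ≠ [] := by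
  simpa [firstCopies]

theorem exists_find?_fst_eq_some {l : List (SplitT ι c)} {j : SplitT ι c} (hj : j ∈ l) :
    ∃ b, l.find? (fun x => x.1 = j.1) = some b :=
  Option.isSome_iff_exists.1 (List.find?_isSome.2 ⟨j, hj, by simp⟩)

theorem sum_splitShare (χ : List ι → ι → ℝ) (l : List (SplitT ι c)) :
    ∑ j ∈ l.toFinset, splitShare χ l j =
      ∑ i ∈ (firstCopies l).toFinset, χ (firstCopies l) i := by
  set F := l.toFinset.filter (fun j => l.find? (fun x => x.1 = j.1) = some j)
  have hinj : Set.InjOn Sigma.fst (F : Set (SplitT ι c)) := by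
    intro j₁ h₁ j₂ h₂ h
    simp only [F, mem_coe, mem_filter] at h₁ h₂
    rw [h] at h₁
    exact Option.some.inj (h₁.2.symm.trans h₂.2)
  have himage : F.image Sigma.fst = (firstCopies l).toFinset := by
    rw [toFinset_firstCopies]
    refine Subset.antisymm (image_subset_image (filter_subset _ _)) fun i hi => ?_
    obtain ⟨j, hj, rfl⟩ := mem_image.1 hi
    obtain ⟨b, hb⟩ := exists_find?_fst_eq_some (List.mem_toFinset.1 hj)
    have hbj : b.1 = j.1 := by simpa using List.find?_some hb
    have hbF : b ∈ F :=
      mem_filter.2 ⟨List.mem_toFinset.2 (List.mem_of_find?_eq_some hb), by rwa [hbj]⟩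
    exact mem_image.2 ⟨b, hbF, hbj⟩
  rw [← himage, sum_image hinj, sum_filter]
  rfl

theorem splitShare_append_singleton_self (χ : List ι → ι → ℝ) {l : List (SplitT ι c)}
    {a : SplitT ι c} (ha : a ∉ l) :
    splitShare χ (l ++ [a]) a =
      if a.1 ∈ l.map Sigma.fst then 0 else χ (firstCopies l ++ [a.1]) a.1 := by
  rw [splitShare, firstCopies_append_singleton, List.find?_append]
  by_cases h : a.1 ∈ l.map Sigma.fst
  · obtain ⟨j, hj, hja⟩ := List.mem_map.1 h
    obtain ⟨b, hb⟩ := exists_find?_fst_eq_some hj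
    rw [hja] at hb
    have hba : b ≠ a := fun hba => ha (hba ▸ List.mem_of_find?_eq_some hb)
    simp [h, hb, hba]
  · have hnone : l.find? (fun x => x.1 = a.1) = none :=
      List.find?_eq_none.2 fun x hx hxa => h (List.mem_map.2 ⟨x, hx, by simpa using hxa⟩)
    simp [h, hnone]

theorem prefixShareSum_splitShare (χ : List ι → ι → ℝ) {l : List (SplitT ι c)}
    (hl : l.Nodup) :
    prefixShareSum (splitShare χ) l = prefixShareSum χ (firstCopies l) := by
  induction l using List.reverseRecOn with
  | nil => rfl
  | append_singleton l a ih =>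
    have ha : a ∉ l := fun ha => List.disjoint_of_nodup_append hl ha (List.mem_singleton_self a)
    rw [prefixShareSum_append_singleton, ih (hl.sublist (List.sublist_append_left _ _)),
      splitShare_append_singleton_self χ ha, firstCopies_append_singleton]
    split_ifs
    · rw [add_zero]
    · rw [prefixShareSum_append_singleton]

namespace ContainsEarlierCopies

variable {s : Finset (SplitT ι c)} {l : List (SplitT ι c)}

theorem find?_filter (h : ContainsEarlierCopies s l) {j : SplitT ι c} (hj : j ∈ l)
    (hjs : j ∈ s) :
    (l.filter (· ∈ s)).find? (fun x => x.1 = j.1) = l.find? (fun x => x.1 = j.1) := by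
  obtain ⟨b, hb⟩ := exists_find?_fst_eq_some hj
  obtain ⟨hbj, l₁, l₂, rfl, hl₁⟩ := List.find?_eq_some_iff_append.1 hb
  have hbs : b ∈ s := by
    rcases List.mem_append.1 hj with hj₁ | hj₂
    · simpa using hl₁ j hj₁
    · rcases List.mem_cons.1 hj₂ with rfl | hj₂
      · exact hjs
      · refine h ?_ (by simpa using hbj) hjs
        exact (List.cons_sublist_cons.2 (List.singleton_sublist.2 hj₂)).trans
          (List.sublist_append_right l₁ _)
  rw [hb, List.find?_filter]
  exact List.find?_eq_some_iff_append.2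
    ⟨by simpa [hbs] using hbj, l₁, l₂, rfl,
      fun x hx => by simpa using Or.inr (by simpa using hl₁ x hx)⟩

theorem firstCopies_filter_sublist (h : ContainsEarlierCopies s l) :
    (firstCopies (l.filter (· ∈ s))).Sublist (firstCopies l) := by
  induction l using List.reverseRecOn with
  | nil => simp
  | append_singleton l a ih =>
    have ih := ih (h.mono (List.sublist_append_left _ _))
    rw [List.filter_append, firstCopies_append_singleton]
    by_cases has : a ∈ s
    · have hmem : a.1 ∈ (l.filter (· ∈ s)).map Sigma.fst ↔ a.1 ∈ l.map Sigma.fst := by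
        refine ⟨fun ha => List.map_subset _ List.filter_sublist.subset ha, fun ha => ?_⟩
        obtain ⟨b, hb, hba⟩ := List.mem_map.1 ha
        have hba' : [b, a].Sublist (l ++ [a]) :=
          (List.singleton_sublist.2 hb).append (List.Sublist.refl [a])
        have hbs : b ∈ s := h hba' hba has
        exact List.mem_map.2 ⟨b, List.mem_filter.2 ⟨hb, by simpa using hbs⟩, hba⟩
      rw [List.filter_cons_of_pos (by simpa using has), List.filter_nil,
        firstCopies_append_singleton]
      simp only [hmem]
      split_ifs
      · exact ih
      · exact ih.append_right _
    · rw [List.filter_cons_of_neg (by simpa using has), List.filter_nil, List.append_nil]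
      split_ifs
      · exact ih
      · exact ih.trans (List.sublist_append_left _ _)

theorem splitShare_le_splitShare_filter {χ : List ι → ι → ℝ}
    (hcm : ∀ l : List ι, l.Nodup → ∀ s : Finset ι, s ⊆ l.toFinset → ∀ i ∈ s,
      χ l i ≤ χ (l.filter (fun a => a ∈ s)) i)
    (h : ContainsEarlierCopies s l) {j : SplitT ι c} (hj : j ∈ l) (hjs : j ∈ s) :
    splitShare χ l j ≤ splitShare χ (l.filter (· ∈ s)) j := by
  set L := firstCopies l
  set S := firstCopies (l.filter (· ∈ s))
  have hSL : S.toFinset ⊆ L.toFinset := fun i hi =>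
    List.mem_toFinset.2 (h.firstCopies_filter_sublist.subset (List.mem_toFinset.1 hi))
  have hjS : j.1 ∈ S.toFinset := by
    rw [toFinset_firstCopies]
    exact mem_image_of_mem _ (List.mem_toFinset.2 (List.mem_filter.2 ⟨hj, by simpa using hjs⟩))
  have hS : L.filter (· ∈ S.toFinset) = S := by
    simpa using h.firstCopies_filter_sublist.filter_mem_eq (nodup_firstCopies l)
  rw [splitShare, splitShare, h.find?_filter hj hjs]
  split_ifs
  · calc χ L j.1 ≤ χ (L.filter (· ∈ S.toFinset)) j.1 :=
          hcm L (nodup_firstCopies l) _ hSL _ hjS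
      _ = χ S j.1 := by rw [hS]
  · exact le_rfl

end ContainsEarlierCopies

theorem containsEarlierCopies_of_respectsBlocks {K : ℕ} {B : Fin K → Finset (SplitT ι c)}
    (hone : ∀ m : Fin K, ∀ a ∈ B m, ∀ b ∈ B m, a.1 = b.1 → a = b)
    {l : List (SplitT ι c)} (hl : l.Nodup) (hB : RespectsBlocks B l)
    {s : Finset (SplitT ι c)} {t : Fin K} (hst : ∀ a ∈ s, ∃ m : Fin K, m ≤ t ∧ a ∈ B m)
    (hts : ∀ a ∈ l.toFinset, a ∉ s → ∃ m : Fin K, t ≤ m ∧ a ∈ B m) :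
    ContainsEarlierCopies s l := by
  intro b j hbj hfst hjs
  by_contra hbs
  have hb : b ∈ l := hbj.subset (by simp)
  have hj : j ∈ l := hbj.subset (by simp)
  obtain ⟨m, hmt, hjm⟩ := hst j hjs
  obtain ⟨m', htm', hbm'⟩ := hts b (List.mem_toFinset.2 hb) hbs
  rcases (hmt.trans htm').lt_or_eq with hlt | rfl
  · exact Nat.lt_asymm (hB m m' hlt j b hjm hbm' hj hb)
      (List.idxOf_lt_idxOf_of_pair_sublist hl hbj)
  · exact hbs (hone m b hbm' j hjm hfst ▸ hjs)

end SplitShare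

theorem split_cost_share_properties_general
    (f : Finset V → ℝ) (η β : ℝ)
    (χ : List V → V → ℝ)
    -- χ is an (η,β)-cost-sharing scheme for f:
    (hbb : ∀ l : List V, l ≠ [] → l.Nodup →
      ∑ i ∈ l.toFinset, χ l i ≤ f l.toFinset ∧ f l.toFinset / β ≤ ∑ i ∈ l.toFinset, χ l i)
    (hcm : ∀ l : List V, l.Nodup → ∀ s : Finset V, s ⊆ l.toFinset → ∀ i ∈ s,
      χ l i ≤ χ (l.filter (fun a => a ∈ s)) i)
    (hsum : ∀ l : List V, l ≠ [] → l.Nodup →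
      ∑ ℓ : Fin l.length, χ (l.take (ℓ.1 + 1)) (l.get ℓ) ≤ η * f l.toFinset)
    (K : ℕ) (B : Fin K → Finset (SplitT V n))
    -- each block contains at most one copy of each original element
    (hone : ∀ k : Fin K, ∀ a ∈ B k, ∀ b ∈ B k, a.1 = b.1 → a = b) :
    -- (1) β-budget balance
    (∀ l' : List (SplitT V n), l' ≠ [] → l'.Nodup →
      ∑ j ∈ l'.toFinset, splitShare χ l' j ≤ f (l'.toFinset.image Sigma.fst)
      ∧ f (l'.toFinset.image Sigma.fst) / β ≤ ∑ j ∈ l'.toFinset, splitShare χ l' j)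
    -- (2) weak η-summability
    ∧ (∀ l' : List (SplitT V n), l' ≠ [] → l'.Nodup →
      ∑ ℓ : Fin l'.length, splitShare χ (l'.take (ℓ.1 + 1)) (l'.get ℓ)
        ≤ η * f (l'.toFinset.image Sigma.fst))
    -- (3) cross-monotonicity for partial-prefix pairs respecting the block order
    ∧ (∀ l' : List (SplitT V n), l'.Nodup → RespectsBlocks B l' →
      ∀ s : Finset (SplitT V n), s ⊆ l'.toFinset →
      RespectsBlocks B (l'.filter (fun a => a ∈ s)) →
      (∃ t : Fin K, (∀ a ∈ s, ∃ m : Fin K, m ≤ t ∧ a ∈ B m)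
        ∧ (∀ a ∈ l'.toFinset, a ∉ s → ∃ m : Fin K, t ≤ m ∧ a ∈ B m)) →
      ∀ j ∈ s, splitShare χ l' j ≤ splitShare χ (l'.filter (fun a => a ∈ s)) j) := by
  refine ⟨fun l' hne hnd => ?_, fun l' hne hnd => ?_, ?_⟩
  · rw [sum_splitShare, ← toFinset_firstCopies]
    exact hbb _ (firstCopies_ne_nil hne) (nodup_firstCopies l')
  · change prefixShareSum (splitShare χ) l' ≤ _
    rw [prefixShareSum_splitShare χ hnd, ← toFinset_firstCopies]
    exact hsum _ (firstCopies_ne_nil hne) (nodup_firstCopies l')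
  · rintro l' hnd hB s hs - ⟨t, hst, hts⟩ j hjs
    have hC := containsEarlierCopies_of_respectsBlocks hone hnd hB hst hts
    exact hC.splitShare_le_splitShare_filter hcm (List.mem_toFinset.1 (hs hjs)) hjs

/-- Lemma 3: given an `(η,β)`-cost-sharing scheme `χ` for `f` and a partition of the
split ground set into blocks `B 0 = A_K, …, B (K-1) = A_1`, each containing at most one
copy of each original element, the scheme `χ' = splitShare χ` for the split cost function
`f' = f ∘ Π` is (1) `β`-budget balanced, (2) weakly `η`-summable, and (3) cross-monotone
for every pair `S' ⊆ T'` of ordered sets whose orderings respect the block order and such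
that `S'` is a partial prefix of `T'` (for some `t`, `S' ⊆ A_K ∪ ⋯ ∪ A_t` and
`T' ∖ S' ⊆ A_t ∪ ⋯ ∪ A_1`). -/
theorem split_cost_share_properties
    (f : Finset V → ℝ) (η β : ℝ)
    (χ : List V → V → ℝ)
    -- χ is an (η,β)-cost-sharing scheme for f:
    (hbb : ∀ l : List V, l ≠ [] → l.Nodup →
      ∑ i ∈ l.toFinset, χ l i ≤ f l.toFinset ∧ f l.toFinset / β ≤ ∑ i ∈ l.toFinset, χ l i)
    (hcm : ∀ l : List V, l.Nodup → ∀ s : Finset V, s ⊆ l.toFinset → ∀ i ∈ s,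
      χ l i ≤ χ (l.filter (fun a => a ∈ s)) i)
    (hsum : ∀ l : List V, l ≠ [] → l.Nodup →
      ∑ ℓ : Fin l.length, χ (l.take (ℓ.1 + 1)) (l.get ℓ) ≤ η * f l.toFinset)
    -- the blocks partition the split ground set
    (K : ℕ) (B : Fin K → Finset (SplitT V n))
    (hdisj : ∀ k l : Fin K, k ≠ l → Disjoint (B k) (B l))
    (hcover : Finset.univ.biUnion B = Finset.univ)
    -- each block contains at most one copy of each original element
    (hone : ∀ k : Fin K, ∀ a ∈ B k, ∀ b ∈ B k, a.1 = b.1 → a = b) :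
    -- (1) β-budget balance
    (∀ l' : List (SplitT V n), l' ≠ [] → l'.Nodup →
      ∑ j ∈ l'.toFinset, splitShare χ l' j ≤ f (l'.toFinset.image Sigma.fst)
      ∧ f (l'.toFinset.image Sigma.fst) / β ≤ ∑ j ∈ l'.toFinset, splitShare χ l' j)
    -- (2) weak η-summability
    ∧ (∀ l' : List (SplitT V n), l' ≠ [] → l'.Nodup →
      ∑ ℓ : Fin l'.length, splitShare χ (l'.take (ℓ.1 + 1)) (l'.get ℓ)
        ≤ η * f (l'.toFinset.image Sigma.fst))
    -- (3) cross-monotonicity for partial-prefix pairs respecting the block order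
    ∧ (∀ l' : List (SplitT V n), l'.Nodup → RespectsBlocks B l' →
      ∀ s : Finset (SplitT V n), s ⊆ l'.toFinset →
      RespectsBlocks B (l'.filter (fun a => a ∈ s)) →
      (∃ t : Fin K, (∀ a ∈ s, ∃ m : Fin K, m ≤ t ∧ a ∈ B m)
        ∧ (∀ a ∈ l'.toFinset, a ∉ s → ∃ m : Fin K, t ≤ m ∧ a ∈ B m)) →
      ∀ j ∈ s, splitShare χ l' j ≤ splitShare χ (l'.filter (fun a => a ∈ s)) j) :=
  split_cost_share_properties_general f η β χ hbb hcm hsum K B hone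
end

section
/- Let V = {1,2,...,n}, let f : 2^V → ℝ be supermodular, and let p_1 ≥ p_2 ≥ ... ≥ p_n be marginal probabilities in [0,1]. Let S_i = {1,2,...,i}. Then the worst-case expected value is attained by the nested (prefix) distribution and equals L(f,V,{p_i}) = p_n·f(S_n) + Σ_{i=1}^{n−1} (p_i − p_{i+1})·f(S_i) + (1 − p_1)·f(∅). That is, the distribution assigning probability p_n to S_n, probability p_i − p_{i+1} to S_i for 1 ≤ i ≤ n−1, probability 1 − p_1 to ∅, and 0 to all other sets, is a worst-case distribution. -/
open Finset

variable {W : Type*} [Fintype W] [DecidableEq W]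

/-!
Order the ground set as `0 < 1 < … < n-1` and let `S_k` be the prefix of length `k`. Adding the
elements of `S` in increasing order, supermodularity bounds `f S` by the modular function
`g S = f ∅ + ∑ j ∈ S, (f S_{j+1} - f S_j)`, and `g = f` on the prefixes. The expectation of a
modular function depends only on the marginals, so for every distribution `γ` with marginals
`p` we get `E_γ f ≤ E_γ g = E_α g = E_α f`, the last step because the nested distribution `α`
is supported on prefixes.
-/

theorem expVal_eq_sum_of_eq_sum_ite {ι : Type*} (s : Finset ι) (w : ι → ℝ) (T : ι → Finset W)
    (α : Finset W → ℝ) (hα : ∀ S, α S = ∑ i ∈ s, w i * if S = T i then 1 else 0)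
    (g : Finset W → ℝ) : expVal α g = ∑ i ∈ s, w i * g (T i) := by
  simp only [expVal, hα, sum_mul, mul_assoc, ite_mul, one_mul, zero_mul, mul_ite, mul_zero]
  rw [sum_comm]
  simp

theorem sum_filter_mem_eq_expVal (α : Finset W → ℝ) (j : W) :
    ∑ S ∈ univ.filter (fun S => j ∈ S), α S = expVal α (fun S => if j ∈ S then 1 else 0) := by
  simp [expVal, sum_filter]

theorem expVal_const_add_sum {p : W → ℝ} {γ : Finset W → ℝ} (hsum : ∑ S, γ S = 1)
    (hmarg : ∀ i, ∑ S ∈ univ.filter (fun S => i ∈ S), γ S = p i) (c : ℝ) (x : W → ℝ) :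
    expVal γ (fun S => c + ∑ i ∈ S, x i) = c + ∑ i, p i * x i := by
  have hswap : ∑ S, γ S * ∑ i ∈ S, x i = ∑ i, p i * x i := by
    simp_rw [← hmarg, sum_mul, mul_sum]
    exact sum_comm' (by simp)
  simp only [expVal, mul_add, sum_add_distrib, ← sum_mul, hsum, one_mul, hswap]

def prefixSet (n k : ℕ) : Finset (Fin n) := univ.filter fun j => (j : ℕ) < k

@[simp]
theorem mem_prefixSet {n k : ℕ} {j : Fin n} : j ∈ prefixSet n k ↔ (j : ℕ) < k := by
  simp [prefixSet]

theorem prefixSet_zero (n : ℕ) : prefixSet n 0 = ∅ := by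
  ext; simp

theorem insert_prefixSet {n : ℕ} (j : Fin n) : insert j (prefixSet n j) = prefixSet n (j + 1) := by
  ext i; simp [le_iff_lt_or_eq, or_comm, Fin.val_inj]

def prefixGain {n : ℕ} (f : Finset (Fin n) → ℝ) (j : Fin n) : ℝ :=
  f (prefixSet n (j + 1)) - f (prefixSet n j)

theorem add_sum_prefixGain_prefixSet {n : ℕ} (f : Finset (Fin n) → ℝ) {k : ℕ} (hk : k ≤ n) :
    f ∅ + ∑ j ∈ prefixSet n k, prefixGain f j = f (prefixSet n k) := by
  induction k with
  | zero => simp [prefixSet_zero]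
  | succ k ih =>
    let j : Fin n := ⟨k, hk⟩
    rw [← insert_prefixSet j, sum_insert (by simp [j]), ← add_assoc, add_comm (f ∅),
      add_assoc, ih (Nat.le_of_succ_le hk), prefixGain, insert_prefixSet]
    ring

theorem le_add_sum_prefixGain {n : ℕ} {f : Finset (Fin n) → ℝ}
    (hsuper : ∀ T S : Finset (Fin n), T ⊆ S → ∀ i ∉ S,
      f (insert i T) - f T ≤ f (insert i S) - f S)
    (S : Finset (Fin n)) : f S ≤ f ∅ + ∑ j ∈ S, prefixGain f j := by
  induction S using Finset.induction_on_max with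
  | empty => simp
  | insert m S hlt ih =>
    have hS : S ⊆ prefixSet n m := fun j hj => by simpa using hlt j hj
    have hgain := hsuper S (prefixSet n m) hS m (by simp)
    rw [insert_prefixSet] at hgain
    rw [sum_insert fun hm => lt_irrefl m (hlt m hm), prefixGain]
    linarith

def nestedDist (n : ℕ) (q : ℕ → ℝ) (S : Finset (Fin n)) : ℝ :=
  ∑ i ∈ range (n + 1), (q i - q (i + 1)) * if S = prefixSet n i then 1 else 0

section nestedDist

variable {n : ℕ} {q : ℕ → ℝ}

theorem expVal_nestedDist (q : ℕ → ℝ) (g : Finset (Fin n) → ℝ) :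
    expVal (nestedDist n q) g = ∑ i ∈ range (n + 1), (q i - q (i + 1)) * g (prefixSet n i) :=
  expVal_eq_sum_of_eq_sum_ite _ _ _ _ (fun _ => rfl) g

theorem nestedDist_nonneg (hq : ∀ i ≤ n, q (i + 1) ≤ q i) (S : Finset (Fin n)) :
    0 ≤ nestedDist n q S :=
  sum_nonneg fun i hi => mul_nonneg (sub_nonneg.2 (hq i (Nat.lt_succ_iff.1 (mem_range.1 hi))))
    (by split_ifs <;> norm_num)

theorem sum_nestedDist (h0 : q 0 = 1) (hlast : q (n + 1) = 0) :
    ∑ S, nestedDist n q S = 1 := by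
  have h := expVal_nestedDist (n := n) q fun _ => 1
  simp only [expVal, mul_one] at h
  rw [h, sum_range_sub', h0, hlast, sub_zero]

theorem sum_filter_mem_nestedDist (hlast : q (n + 1) = 0) (j : Fin n) :
    ∑ S ∈ univ.filter (fun S => j ∈ S), nestedDist n q S = q (j + 1) := by
  have hIco : (range (n + 1)).filter (fun i => (j : ℕ) < i) = Ico ((j : ℕ) + 1) (n + 1) := by
    ext i; simp only [mem_filter, mem_range, mem_Ico]; omega
  have htel := sum_Ico_sub q (show (j : ℕ) + 1 ≤ n + 1 by omega)
  rw [sum_filter_mem_eq_expVal, expVal_nestedDist]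
  simp only [mem_prefixSet, mul_ite, mul_one, mul_zero]
  rw [← sum_filter, hIco]
  rw [sum_sub_distrib] at htel ⊢
  linarith

theorem isDistWithMarginals_nestedDist (h0 : q 0 = 1) (hlast : q (n + 1) = 0)
    (hq : ∀ i ≤ n, q (i + 1) ≤ q i) :
    IsDistWithMarginals (fun j : Fin n => q (j + 1)) (nestedDist n q) :=
  ⟨nestedDist_nonneg hq, sum_nestedDist h0 hlast, sum_filter_mem_nestedDist hlast⟩

theorem expVal_le_expVal_nestedDist {f : Finset (Fin n) → ℝ}
    (hsuper : ∀ T S : Finset (Fin n), T ⊆ S → ∀ i ∉ S,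
      f (insert i T) - f T ≤ f (insert i S) - f S)
    (h0 : q 0 = 1) (hlast : q (n + 1) = 0) {γ : Finset (Fin n) → ℝ}
    (hγ : IsDistWithMarginals (fun j : Fin n => q (j + 1)) γ) :
    expVal γ f ≤ expVal (nestedDist n q) f := by
  obtain ⟨hγ0, hγsum, hγmarg⟩ := hγ
  calc expVal γ f ≤ expVal γ fun S => f ∅ + ∑ j ∈ S, prefixGain f j :=
        sum_le_sum fun S _ => mul_le_mul_of_nonneg_left (le_add_sum_prefixGain hsuper S) (hγ0 S)
    _ = expVal (nestedDist n q) fun S => f ∅ + ∑ j ∈ S, prefixGain f j := by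
      rw [expVal_const_add_sum hγsum hγmarg,
        expVal_const_add_sum (sum_nestedDist h0 hlast) (sum_filter_mem_nestedDist hlast)]
    _ = expVal (nestedDist n q) f := by
      simp only [expVal_nestedDist]
      refine sum_congr rfl fun i hi => ?_
      rw [add_sum_prefixGain_prefixSet f (Nat.lt_succ_iff.1 (mem_range.1 hi))]

end nestedDist

-- `nestedTail n p i` is the probability that the nested distribution picks a superset of `S_i`.
def nestedTail (n : ℕ) (p : ℕ → ℝ) (i : ℕ) : ℝ :=
  if i = 0 then 1 else if i ≤ n then p (i - 1) else 0

section nestedTail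

variable {n : ℕ} {p : ℕ → ℝ}

@[simp]
theorem nestedTail_zero : nestedTail n p 0 = 1 := rfl

@[simp]
theorem nestedTail_succ_self : nestedTail n p (n + 1) = 0 := by
  simp [nestedTail]

theorem nestedTail_succ_of_lt {j : ℕ} (hj : j < n) : nestedTail n p (j + 1) = p j := by
  simp [nestedTail, Nat.succ_le_of_lt hj]

theorem ite_eq_nestedTail_sub (hn : 1 ≤ n) {i : ℕ} (hi : i ≤ n) :
    (if i = 0 then 1 - p 0 else if i = n then p (n - 1) else p (i - 1) - p i)
      = nestedTail n p i - nestedTail n p (i + 1) := by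
  simp only [nestedTail]
  split_ifs <;> first | omega | contradiction | (subst_vars; simp)

theorem nestedTail_succ_le (hn : 1 ≤ n) (hp : ∀ i, i < n → 0 ≤ p i ∧ p i ≤ 1)
    (hpmono : ∀ i j : ℕ, i ≤ j → j < n → p j ≤ p i) {i : ℕ} (hi : i ≤ n) :
    nestedTail n p (i + 1) ≤ nestedTail n p i := by
  rw [← sub_nonneg, ← ite_eq_nestedTail_sub hn hi]
  split_ifs
  · linarith [(hp 0 (by omega)).2]
  · exact (hp (n - 1) (by omega)).1
  · linarith [hpmono (i - 1) i (by omega) (by omega)]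

theorem sum_range_succ_ite_mul (hn : 1 ≤ n) (F : ℕ → ℝ) :
    ∑ i ∈ range (n + 1),
        (if i = 0 then 1 - p 0 else if i = n then p (n - 1) else p (i - 1) - p i) * F i
      = p (n - 1) * F n + (∑ i ∈ Ico 1 n, (p (i - 1) - p i) * F i) + (1 - p 0) * F 0 := by
  rw [sum_range_succ, range_eq_Ico, sum_eq_sum_Ico_succ_bot (by omega),
    sum_congr rfl fun i hi => by rw [if_neg (by grind), if_neg (by grind)],
    if_pos rfl, if_neg (by omega), if_pos rfl]
  ring

end nestedTail

/-- Lemma 2: for a supermodular cost function and marginals `p 0 ≥ p 1 ≥ … ≥ p (n-1)`,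
the nested (prefix) distribution — assigning probability `p (n-1)` to `S_n`,
`p (i-1) - p i` to `S_i` for `1 ≤ i ≤ n-1`, and `1 - p 0` to `∅` — is a worst-case
distribution, and the worst-case expected value equals
`p_n f(S_n) + Σ_{i=1}^{n-1} (p_i - p_{i+1}) f(S_i) + (1-p_1) f(∅)`
(stated here with 0-indexed probabilities). -/
theorem supermodular_worst_case_distribution
    (n : ℕ) (hn : 1 ≤ n)
    (p : ℕ → ℝ)
    (hp : ∀ i, i < n → 0 ≤ p i ∧ p i ≤ 1)
    (hpmono : ∀ i j : ℕ, i ≤ j → j < n → p j ≤ p i)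
    (f : Finset (Fin n) → ℝ)
    (hsuper : ∀ T S : Finset (Fin n), T ⊆ S → ∀ i ∉ S,
      f (insert i T) - f T ≤ f (insert i S) - f S)
    (Si : ℕ → Finset (Fin n))
    (hSi : ∀ k, Si k = Finset.univ.filter (fun j : Fin n => (j : ℕ) < k))
    (α : Finset (Fin n) → ℝ)
    (hα : ∀ S, α S = ∑ i ∈ Finset.range (n + 1),
      (if i = 0 then 1 - p 0 else if i = n then p (n - 1) else p (i - 1) - p i)
        * (if S = Si i then 1 else 0)) :
    IsDistWithMarginals (fun i : Fin n => p i) α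
    ∧ IsGreatest
        {v | ∃ γ, IsDistWithMarginals (fun i : Fin n => p i) γ ∧ v = expVal γ f}
        (expVal α f)
    ∧ expVal α f
        = p (n - 1) * f (Si n) + (∑ i ∈ Finset.Ico 1 n, (p (i - 1) - p i) * f (Si i))
            + (1 - p 0) * f ∅ := by
  obtain rfl : Si = prefixSet n := funext hSi
  have hmarg : (fun j : Fin n => p j) = fun j : Fin n => nestedTail n p (j + 1) :=
    funext fun j => (nestedTail_succ_of_lt j.isLt).symm
  have hα_nested : α = nestedDist n (nestedTail n p) := funext fun S =>
    (hα S).trans <| sum_congr rfl fun i hi => by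
      rw [ite_eq_nestedTail_sub hn (Nat.lt_succ_iff.1 (mem_range.1 hi))]
  have hdist : IsDistWithMarginals (fun j : Fin n => p j) α := by
    rw [hmarg, hα_nested]
    exact isDistWithMarginals_nestedDist nestedTail_zero nestedTail_succ_self
      fun i => nestedTail_succ_le hn hp hpmono
  refine ⟨hdist, ⟨⟨α, hdist, rfl⟩, ?_⟩, ?_⟩
  · rintro _ ⟨γ, hγ, rfl⟩
    rw [hmarg] at hγ
    rw [hα_nested]
    exact expVal_le_expVal_nestedDist hsuper nestedTail_zero nestedTail_succ_self hγ
  · rw [expVal_eq_sum_of_eq_sum_ite _ _ _ _ hα, sum_range_succ_ite_mul hn, prefixSet_zero]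
end

section
/- Let V be a finite set of n goods, let K ≥ 1 be an integer, and let f : 2^V → ℝ be a non-decreasing utility function with f(∅) = 0 admitting an (η,β)-cost-sharing scheme. Assign each good of V independently and uniformly at random to one of K players, and let S_k denote the (random) set of goods received by player k. Then the expected total welfare satisfies E[Σ_{k=1}^K f(S_k)] ≥ (1/(ηβ))·(1−1/e)·OPT, where OPT = max{ Σ_{k=1}^K f(A_k) : (A_1,...,A_K) a partition of V into K possibly-empty parts }. -/
open Finset

variable {W : Type*} [Fintype W] [DecidableEq W]

/-!
Give every good an independent uniform arrival time in `Fin N` and reveal the goods in order of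
arrival. Let `P m` be the expected sum, over the goods revealed before time `m`, of the share of
each good in the set of its predecessors, and `L m` the expected share of a good that joins the
revealed set as its last member. With `OPT = ∑ k, f (A k)`, budget balance and cross-monotonicity,
applied to each part `A k` together with the revealed set, give
`OPT / β ≤ K * P m + (1 - m / N) * L m`, and comparing consecutive times gives
`L (m + 1) ≤ N * (P (m + 1) - P m)`. So `OPT / β - K * P m` shrinks by the factor
`(N - 1 - m) / (N - 1 - m + K)` at each step, which by Bernoulli's inequality leaves at most
`((N - 1 + K - M) / (N - 1 + K)) ^ K * OPT / β` at time `M`, while weak summability bounds `P M` by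
`η` times the expected value of `f` on the revealed set. For `N = K * M` that set has the law of
one player's bundle, and as `M → ∞` the factor tends to `(1 - 1 / K) ^ K ≤ 1 / e`.
-/

lemma card_mul_sum_ite_mem {ι α : Type*} [Fintype ι] [DecidableEq ι] [Fintype α]
    [DecidableEq α] (i : ι) (s : Finset α) (F : (ι → α) → ℝ)
    (hF : ∀ ω a, F (Function.update ω i a) = F ω) :
    Fintype.card α * ∑ ω : ι → α, (if ω i ∈ s then F ω else 0) = #s * ∑ ω, F ω := by
  set e := Equiv.funSplitAt i α
  have hsplit : ∀ a b ρ, F (e.symm (a, ρ)) = F (e.symm (b, ρ)) := fun a b ρ => by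
    have : e.symm (a, ρ) = Function.update (e.symm (b, ρ)) i a := by
      ext j
      rcases eq_or_ne j i with rfl | hj <;> simp [e, Function.update, *]
    rw [this, hF]
  have hi : ∀ a ρ, e.symm (a, ρ) i = a := fun a ρ => by simp [e]
  simp only [← e.symm.sum_comp, Fintype.sum_prod_type, hi]
  have hH : ∀ a b, ∑ ρ, F (e.symm (a, ρ)) = ∑ ρ, F (e.symm (b, ρ)) := fun a b =>
    Finset.sum_congr rfl fun ρ _ => hsplit a b ρ
  calc (Fintype.card α : ℝ) * ∑ a, ∑ ρ, (if a ∈ s then F (e.symm (a, ρ)) else 0)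
      = Fintype.card α * ∑ a ∈ s, ∑ ρ, F (e.symm (a, ρ)) := by simp
    _ = ∑ b : α, ∑ a ∈ s, ∑ ρ, F (e.symm (b, ρ)) := by
        rw [← Finset.card_univ, ← nsmul_eq_mul, ← Finset.sum_const]
        exact Finset.sum_congr rfl fun b _ => Finset.sum_congr rfl fun a _ => hH a b
    _ = #s * ∑ b, ∑ ρ, F (e.symm (b, ρ)) := by simp [Finset.mul_sum]

lemma sub_mul_pow_le_mul_sub_one_pow {x : ℝ} (hx : 1 ≤ x) (K : ℕ) :
    (x - K) * x ^ K ≤ x * (x - 1) ^ K := by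
  have hx0 : 0 < x := one_pos.trans_le hx
  have hbern := one_add_mul_le_pow (show (-2 : ℝ) ≤ -x⁻¹ by
    linarith [inv_le_one_of_one_le₀ hx]) K
  have hx' : x ≠ 0 := hx0.ne'
  calc (x - K) * x ^ K = (1 + K * -x⁻¹) * x ^ (K + 1) := by
        rw [pow_succ]
        field_simp
        ring
    _ ≤ (1 + -x⁻¹) ^ K * x ^ (K + 1) := mul_le_mul_of_nonneg_right hbern (by positivity)
    _ = x * (x - 1) ^ K := by
        have hx1 : (1 + -x⁻¹) * x = x - 1 := by
          field_simp
          ring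
        rw [pow_succ, ← mul_assoc, ← mul_pow, hx1]
        ring

lemma pow_mul_le_pow_mul_of_recurrence {y : ℕ → ℝ} {u : ℝ} {K M : ℕ} (hK : 0 < K)
    (hMu : M + K ≤ u + 1) (hy0 : 0 ≤ y 0)
    (hstep : ∀ m < M, (u - m) * y (m + 1) ≤ (u - m - K) * y m) :
    u ^ K * y M ≤ (u - M) ^ K * y 0 := by
  induction M with
  | zero => simp
  | succ M ih =>
    have hK1 : (1 : ℝ) ≤ K := by exact_mod_cast hK
    push_cast at hMu
    have hx : K ≤ u - M := by linarith
    have hIH := ih (by linarith) fun m hm => hstep m (Nat.lt_succ_of_lt hm)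
    have hu : 0 ≤ u ^ K := pow_nonneg (by linarith) K
    refine le_of_mul_le_mul_left ?_ (show 0 < u - M by linarith)
    calc (u - M) * (u ^ K * y (M + 1)) = u ^ K * ((u - M) * y (M + 1)) := by ring
      _ ≤ u ^ K * ((u - M - K) * y M) := mul_le_mul_of_nonneg_left (hstep M M.lt_succ_self) hu
      _ = (u - M - K) * (u ^ K * y M) := by ring
      _ ≤ (u - M - K) * ((u - M) ^ K * y 0) := mul_le_mul_of_nonneg_left hIH (by linarith)
      _ = ((u - M - K) * (u - M) ^ K) * y 0 := by ring
      _ ≤ ((u - M) * (u - M - 1) ^ K) * y 0 :=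
        mul_le_mul_of_nonneg_right (sub_mul_pow_le_mul_sub_one_pow (by linarith) K) hy0
      _ = (u - M) * ((u - ↑(M + 1)) ^ K * y 0) := by push_cast; ring

section PrefixShares

variable {V : Type*}

noncomputable def prefixShares (χ : List V → V → ℝ) (l : List V) : ℝ :=
  ∑ ℓ : Fin l.length, χ (l.take (ℓ + 1)) (l.get ℓ)

@[simp]
lemma prefixShares_nil (χ : List V → V → ℝ) : prefixShares χ [] = 0 := Fin.sum_univ_zero _

lemma prefixShares_append (χ : List V → V → ℝ) (l₁ l₂ : List V) :
    prefixShares χ (l₁ ++ l₂) =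
      prefixShares χ l₁ + ∑ ℓ : Fin l₂.length, χ (l₁ ++ l₂.take (ℓ + 1)) (l₂.get ℓ) := by
  rw [prefixShares, ← Fin.sum_congr' _ (List.length_append).symm, Fin.sum_univ_add]
  congr 1 <;> refine Finset.sum_congr rfl fun ℓ _ => ?_
  · simp [List.take_append_of_le_length (Nat.succ_le_of_lt ℓ.2), List.getElem_append_left ℓ.2]
  · simp [add_assoc, List.take_length_add_append]

variable [DecidableEq V] {f : Finset V → ℝ} {η β : ℝ} {χ : List V → V → ℝ}

lemma IsCostShare.div_le_sum_share (hχ : IsCostShare f η β χ) (hf0 : f ∅ = 0) {l : List V}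
    (hl : l.Nodup) : f l.toFinset / β ≤ ∑ i ∈ l.toFinset, χ l i := by
  rcases eq_or_ne l [] with rfl | hne
  · simp [hf0]
  · exact (hχ.1 l hne hl).2

lemma IsCostShare.prefixShares_le (hχ : IsCostShare f η β χ) (hf0 : f ∅ = 0) {l : List V}
    (hl : l.Nodup) : prefixShares χ l ≤ η * f l.toFinset := by
  rcases eq_or_ne l [] with rfl | hne
  · simp [hf0]
  · exact hχ.2.2 l hne hl

end PrefixShares

section ArrivalOrder

variable {V : Type*} [Fintype V]

def arrivalLE (t : V → ℕ) (a b : V) : Prop :=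
  toLex (t a, Fintype.equivFin V a) ≤ toLex (t b, Fintype.equivFin V b)

noncomputable instance (t : V → ℕ) : DecidableRel (arrivalLE t) := fun _ _ =>
  inferInstanceAs (Decidable (_ ≤ _))

instance (t : V → ℕ) : IsTrans V (arrivalLE t) := ⟨fun _ _ _ => le_trans⟩

instance (t : V → ℕ) : Std.Total (arrivalLE t) := ⟨fun _ _ => le_total _ _⟩

instance (t : V → ℕ) : Std.Antisymm (arrivalLE t) :=
  ⟨fun _ _ hab hba => (Fintype.equivFin V).injective (congrArg (·.2) (le_antisymm hab hba))⟩

lemma arrivalLE_of_lt {t : V → ℕ} {a b : V} (h : t a < t b) : arrivalLE t a b :=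
  Prod.Lex.toLex_le_toLex.2 (Or.inl h)

noncomputable def arrivalOrder (t : V → ℕ) (X : Finset V) : List V := X.sort (arrivalLE t)

lemma arrivalOrder_nodup (t : V → ℕ) (X : Finset V) : (arrivalOrder t X).Nodup := X.sort_nodup _

@[simp]
lemma mem_arrivalOrder (t : V → ℕ) {X : Finset V} {a : V} : a ∈ arrivalOrder t X ↔ a ∈ X :=
  X.mem_sort _

lemma pairwise_arrivalOrder (t : V → ℕ) (X : Finset V) :
    (arrivalOrder t X).Pairwise (arrivalLE t) :=
  X.pairwise_sort _

lemma eq_arrivalOrder (t : V → ℕ) {l : List V} {X : Finset V} (hnd : l.Nodup)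
    (hmem : ∀ a, a ∈ l ↔ a ∈ X) (hl : l.Pairwise (arrivalLE t)) : l = arrivalOrder t X :=
  ((List.perm_ext_iff_of_nodup hnd (arrivalOrder_nodup t X)).2 fun a => by
    rw [hmem, mem_arrivalOrder]).eq_of_pairwise' hl (pairwise_arrivalOrder t X)

lemma arrivalOrder_congr {t t' : V → ℕ} {X : Finset V} (h : ∀ a ∈ X, t a = t' a) :
    arrivalOrder t X = arrivalOrder t' X :=
  eq_arrivalOrder t' (arrivalOrder_nodup t X) (by simp)
    ((pairwise_arrivalOrder t X).imp_of_mem fun {a b} ha hb hab => by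
      rwa [arrivalLE, ← h a ((mem_arrivalOrder t).1 ha), ← h b ((mem_arrivalOrder t).1 hb)])

def revealed (t : V → ℕ) (m : ℕ) : Finset V := univ.filter (t · < m)

@[simp]
lemma mem_revealed {t : V → ℕ} {m : ℕ} {i : V} : i ∈ revealed t m ↔ t i < m := by
  simp [revealed]

variable [DecidableEq V]

@[simp]
lemma toFinset_arrivalOrder (t : V → ℕ) (X : Finset V) : (arrivalOrder t X).toFinset = X :=
  X.sort_toFinset _

lemma eq_arrivalOrder_of_sublist (t : V → ℕ) {l : List V} {X : Finset V}
    (h : l.Sublist (arrivalOrder t X)) :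
    l = arrivalOrder t l.toFinset :=
  eq_arrivalOrder t ((arrivalOrder_nodup t X).sublist h) (by simp)
    ((pairwise_arrivalOrder t X).sublist h)

lemma arrivalOrder_filter (t : V → ℕ) {S X : Finset V} (hSX : S ⊆ X) :
    (arrivalOrder t X).filter (· ∈ S) = arrivalOrder t S :=
  eq_arrivalOrder t ((arrivalOrder_nodup t X).filter _) (fun a => by simpa using @hSX a)
    ((pairwise_arrivalOrder t X).filter _)

lemma arrivalOrder_union (t : V → ℕ) {R S : Finset V}
    (hRS : ∀ a ∈ R, ∀ b ∈ S, t a < t b) :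
    arrivalOrder t (R ∪ S) = arrivalOrder t R ++ arrivalOrder t S := by
  refine (eq_arrivalOrder t ?_ (by simp) ?_).symm
  · refine (arrivalOrder_nodup t R).append (arrivalOrder_nodup t S) fun a ha hb => ?_
    exact lt_irrefl _ (hRS a ((mem_arrivalOrder t).1 ha) a ((mem_arrivalOrder t).1 hb))
  · refine List.pairwise_append.2 ⟨pairwise_arrivalOrder t R, pairwise_arrivalOrder t S, ?_⟩
    simp only [mem_arrivalOrder]
    exact fun a ha b hb => arrivalLE_of_lt (hRS a ha b hb)

variable {f : Finset V → ℝ} {η β : ℝ} {χ : List V → V → ℝ}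

lemma sum_eq_sum_arrivalOrder (t : V → ℕ) (X : Finset V) (F : V → ℝ) :
    ∑ i ∈ X, F i = ∑ ℓ : Fin (arrivalOrder t X).length, F ((arrivalOrder t X).get ℓ) := by
  simp only [List.get_eq_getElem, Fin.sum_univ_fun_getElem]
  rw [← List.sum_toFinset F (arrivalOrder_nodup t X), toFinset_arrivalOrder]

noncomputable def revealedPrefixShares (χ : List V → V → ℝ) (t : V → ℕ) (m : ℕ) : ℝ :=
  prefixShares χ (arrivalOrder t (revealed t m))

/-- Resetting the arrival time of `i` to `m` makes `i` the last of the goods revealed before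
time `m`, and makes this share independent of when `i` actually arrives. -/
noncomputable def lastShare (χ : List V → V → ℝ) (t : V → ℕ) (m : ℕ) (i : V) : ℝ :=
  χ (arrivalOrder (Function.update t i m) (insert i (revealed t m))) i

lemma lastShare_update (t : V → ℕ) (m : ℕ) (i : V) (a : ℕ) :
    lastShare χ (Function.update t i a) m i = lastShare χ t m i := by
  have : insert i (revealed (Function.update t i a) m) = insert i (revealed t m) := by
    ext x
    rcases eq_or_ne x i with rfl | hx <;> simp [*]
  rw [lastShare, lastShare, Function.update_idem, this]

lemma arrivalOrder_update_insert (t : V → ℕ) {R : Finset V} {j : V} {c : ℕ} (hj : j ∉ R)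
    (hR : ∀ x ∈ R, t x < c) :
    arrivalOrder (Function.update t j c) (insert j R) = arrivalOrder t R ++ [j] := by
  have hupd : ∀ x ∈ R, Function.update t j c x = t x := fun x hx =>
    Function.update_of_ne (ne_of_mem_of_not_mem hx hj) _ _
  rw [Finset.insert_eq, Finset.union_comm, arrivalOrder_union, arrivalOrder_congr hupd]
  · simp [arrivalOrder]
  · simpa using fun x hx => (hupd x hx).symm ▸ hR x hx

namespace IsCostShare

variable (hχ : IsCostShare f η β χ)
include hχ

lemma share_le_of_subset (t : V → ℕ) {S T : Finset V} (hST : S ⊆ T) {a : V} (ha : a ∈ S) :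
    χ (arrivalOrder t T) a ≤ χ (arrivalOrder t S) a := by
  simpa [arrivalOrder_filter t hST] using
    hχ.2.1 (arrivalOrder t T) (arrivalOrder_nodup t T) S (by simpa using hST) a ha

lemma share_le_of_sublist (t : V → ℕ) {T : Finset V} {l : List V}
    (hl : l.Sublist (arrivalOrder t T)) {a : V} (ha : a ∈ l) :
    χ (arrivalOrder t T) a ≤ χ l a := by
  rw [eq_arrivalOrder_of_sublist t hl]
  exact hχ.share_le_of_subset t (fun x hx => by simpa using hl.subset (List.mem_toFinset.1 hx))
    (List.mem_toFinset.2 ha)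

lemma sum_share_le_prefixShares (t : V → ℕ) {R T : Finset V} (hRT : R ⊆ T) :
    ∑ i ∈ R, χ (arrivalOrder t T) i ≤ prefixShares χ (arrivalOrder t R) := by
  rw [sum_eq_sum_arrivalOrder t R]
  refine Finset.sum_le_sum fun ℓ _ => hχ.share_le_of_sublist t ?_ ?_
  · refine (List.take_sublist _ _).trans ?_
    rw [← arrivalOrder_filter t hRT]
    exact List.filter_sublist
  · rw [List.get_eq_getElem, List.take_succ_eq_append_getElem ℓ.2]
    exact List.mem_append_right _ (List.mem_singleton_self _)

lemma share_le_lastShare {t : V → ℕ} {m : ℕ} {T : Finset V} {j : V} (hj : j ∉ revealed t m)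
    (hT : insert j (revealed t m) ⊆ T) : χ (arrivalOrder t T) j ≤ lastShare χ t m j := by
  have hR : ∀ x ∈ revealed t m, t x < m := fun x hx => mem_revealed.1 hx
  have hR' : ∀ x ∈ revealed t m, t x < t j := fun x hx =>
    (hR x hx).trans_le (not_lt.1 (mt mem_revealed.2 hj))
  have hlast : lastShare χ t m j = χ (arrivalOrder t (insert j (revealed t m))) j := by
    rw [lastShare, arrivalOrder_update_insert t hj hR, ← arrivalOrder_update_insert t hj hR',
      Function.update_eq_self]
  exact hlast ▸ hχ.share_le_of_subset t hT (mem_insert_self _ _)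

lemma lastShare_le_of_sublist {t : V → ℕ} {c : ℕ} {q : List V} {j : V}
    (h : (q ++ [j]).Sublist (arrivalOrder t (revealed t c))) :
    lastShare χ t c j ≤ χ (q ++ [j]) j := by
  have hmem : ∀ x ∈ q ++ [j], x ∈ revealed t c := fun x hx => by simpa using h.subset hx
  have hjR : j ∈ revealed t c := hmem j (by simp)
  have hjq : j ∉ q.toFinset := fun hj => List.disjoint_of_nodup_append
    ((arrivalOrder_nodup t _).sublist h) (List.mem_toFinset.1 hj) (List.mem_singleton_self j)
  have hq : q = arrivalOrder t q.toFinset :=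
    eq_arrivalOrder_of_sublist t ((List.sublist_append_left q [j]).trans h)
  have hqc : ∀ x ∈ q.toFinset, t x < c := fun x hx =>
    mem_revealed.1 (hmem x (List.mem_append_left _ (List.mem_toFinset.1 hx)))
  calc lastShare χ t c j = χ (arrivalOrder (Function.update t j c) (revealed t c)) j := by
        rw [lastShare, insert_eq_of_mem hjR]
    _ ≤ χ (arrivalOrder (Function.update t j c) (insert j q.toFinset)) j :=
        hχ.share_le_of_subset _ (insert_subset hjR fun x hx =>
          hmem x (List.mem_append_left _ (List.mem_toFinset.1 hx))) (mem_insert_self _ _)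
    _ = χ (q ++ [j]) j := by rw [arrivalOrder_update_insert t hjq hqc, ← hq]

variable (hmono : Monotone f) (hf0 : f ∅ = 0) (hβ : 0 ≤ β)
include hmono hf0 hβ in
lemma div_le_revealedPrefixShares_add_sum_lastShare (t : V → ℕ) (m : ℕ) (B : Finset V) :
    f B / β ≤ revealedPrefixShares χ t m + ∑ i ∈ B \ revealed t m, lastShare χ t m i := by
  set R := revealed t m
  calc f B / β ≤ f (R ∪ B) / β := div_le_div_of_nonneg_right (hmono subset_union_right) hβ
    _ ≤ ∑ i ∈ R ∪ B, χ (arrivalOrder t (R ∪ B)) i := by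
        simpa using hχ.div_le_sum_share hf0 (arrivalOrder_nodup t (R ∪ B))
    _ = ∑ i ∈ R, χ (arrivalOrder t (R ∪ B)) i
          + ∑ i ∈ B \ R, χ (arrivalOrder t (R ∪ B)) i := by
        rw [← union_sdiff_self_eq_union, sum_union disjoint_sdiff, union_sdiff_self_eq_union]
    _ ≤ _ := by
        refine add_le_add (hχ.sum_share_le_prefixShares t subset_union_left)
          (sum_le_sum fun j hj => hχ.share_le_lastShare (mem_sdiff.1 hj).2 ?_)
        exact insert_subset (mem_union_right _ (mem_sdiff.1 hj).1) subset_union_left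

lemma revealedPrefixShares_add_sum_lastShare_le (t : V → ℕ) (m : ℕ) :
    revealedPrefixShares χ t m + ∑ i ∈ revealed t (m + 1) \ revealed t m, lastShare χ t (m + 1) i
      ≤ revealedPrefixShares χ t (m + 1) := by
  set R := revealed t m
  set D := revealed t (m + 1) \ R
  have hsplit : arrivalOrder t (revealed t (m + 1)) = arrivalOrder t R ++ arrivalOrder t D := by
    rw [← arrivalOrder_union, union_sdiff_of_subset]
    · exact fun x hx => mem_revealed.2 ((mem_revealed.1 hx).trans (Nat.lt_succ_self m))
    · intro a ha b hb
      exact (mem_revealed.1 ha).trans_le (not_lt.1 (mt mem_revealed.2 (mem_sdiff.1 hb).2))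
  rw [revealedPrefixShares, revealedPrefixShares, hsplit, prefixShares_append,
    sum_eq_sum_arrivalOrder t D]
  refine add_le_add le_rfl (sum_le_sum fun ℓ _ => ?_)
  have htake : (arrivalOrder t D).take (ℓ + 1)
      = (arrivalOrder t D).take ℓ ++ [(arrivalOrder t D).get ℓ] :=
    List.take_succ_eq_append_getElem ℓ.2
  have h := hχ.lastShare_le_of_sublist (q := arrivalOrder t R ++ (arrivalOrder t D).take ℓ)
    (j := (arrivalOrder t D).get ℓ) (by
      rw [hsplit, List.append_assoc, ← htake]
      exact (List.take_sublist _ _).append_left _)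
  rwa [List.append_assoc, ← htake] at h

end IsCostShare

end ArrivalOrder

section Sampling

open Function

variable {V : Type*} [Fintype V] [DecidableEq V] {f : Finset V → ℝ} {η β : ℝ}
  {χ : List V → V → ℝ}

/-- Unnormalized expectation over independent uniform arrival times in `Fin N`:
a sum over all `N ^ card V` arrival profiles. -/
noncomputable def totalPrefixShares (χ : List V → V → ℝ) (N m : ℕ) : ℝ :=
  ∑ ω : V → Fin N, revealedPrefixShares χ (Fin.val ∘ ω) m

noncomputable def totalLastShares (χ : List V → V → ℝ) (N m : ℕ) : ℝ :=
  ∑ ω : V → Fin N, ∑ i, lastShare χ (Fin.val ∘ ω) m i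

lemma card_mul_sum_sum_lastShare_filter (N c : ℕ) (p : Fin N → Prop) [DecidablePred p] :
    N * ∑ ω : V → Fin N, ∑ i ∈ univ.filter (fun i => p (ω i)), lastShare χ (Fin.val ∘ ω) c i =
      #(univ.filter p) * totalLastShares χ N c := by
  have hi : ∀ i, (N : ℝ) * ∑ ω : V → Fin N,
      (if p (ω i) then lastShare χ (Fin.val ∘ ω) c i else 0) =
        #(univ.filter p) * ∑ ω : V → Fin N, lastShare χ (Fin.val ∘ ω) c i := fun i => by
    simpa using card_mul_sum_ite_mem i (univ.filter p) (fun ω => lastShare χ (Fin.val ∘ ω) c i)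
      fun ω a => by rw [Function.comp_update, lastShare_update]
  simp only [Finset.sum_filter]
  rw [Finset.sum_comm, Finset.mul_sum, Finset.sum_congr rfl fun i _ => hi i, totalLastShares,
    Finset.sum_comm, Finset.mul_sum]

lemma totalPrefixShares_zero (N : ℕ) : totalPrefixShares χ N 0 = 0 := by
  simp [totalPrefixShares, revealedPrefixShares, revealed, arrivalOrder]

lemma sum_sum_filter_of_partition {ι : Type*} [Fintype ι] (A : ι → Finset V)
    (hA : Pairwise (Disjoint on A)) (hcover : univ.biUnion A = univ) (p : V → Prop)
    [DecidablePred p] (g : V → ℝ) :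
    ∑ k, ∑ i ∈ (A k).filter p, g i = ∑ i ∈ univ.filter p, g i := by
  rw [← hcover, filter_biUnion, sum_biUnion]
  exact fun k _ l _ hkl => (hA hkl).mono (filter_subset _ _) (filter_subset _ _)

namespace IsCostShare

variable (hχ : IsCostShare f η β χ)
include hχ

lemma totalPrefixShares_le (hf0 : f ∅ = 0) (N m : ℕ) :
    totalPrefixShares χ N m ≤ η * ∑ ω : V → Fin N, f (revealed (Fin.val ∘ ω) m) := by
  rw [Finset.mul_sum]
  exact Finset.sum_le_sum fun ω _ => by
    simpa [revealedPrefixShares] using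
      hχ.prefixShares_le hf0 (arrivalOrder_nodup (Fin.val ∘ ω) (revealed _ m))

lemma le_totalPrefixShares_add_totalLastShares (hmono : Monotone f) (hf0 : f ∅ = 0)
    (hβ : 0 ≤ β) {K : ℕ} (A : Fin K → Finset V) (hA : Pairwise (Disjoint on A))
    (hcover : univ.biUnion A = univ) {N m : ℕ} (hm : m ≤ N) :
    N * (N ^ Fintype.card V * ((∑ k, f (A k)) / β))
      ≤ N * (K * totalPrefixShares χ N m) + (N - m) * totalLastShares χ N m := by
  set late : Finset (Fin N) := univ.filter (fun a => ¬ (a : ℕ) < m)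
  have hpoint : ∀ ω : V → Fin N, (∑ k, f (A k)) / β ≤ K * revealedPrefixShares χ (Fin.val ∘ ω) m
      + ∑ i ∈ univ.filter (fun i => ω i ∈ late), lastShare χ (Fin.val ∘ ω) m i := fun ω => by
    have hlate : ∀ B : Finset V, B \ revealed (Fin.val ∘ ω) m = B.filter (fun i => ω i ∈ late) :=
      fun B => by ext; simp [late]
    rw [Finset.sum_div, ← sum_sum_filter_of_partition A hA hcover, ← nsmul_eq_mul,
      ← Fin.sum_const, ← Finset.sum_add_distrib]
    exact Finset.sum_le_sum fun k _ => hlate (A k) ▸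
      hχ.div_le_revealedPrefixShares_add_sum_lastShare hmono hf0 hβ _ m (A k)
  have hsum := Finset.sum_le_sum fun ω (_ : ω ∈ univ) => hpoint ω
  rw [Finset.sum_const, Finset.card_univ, Fintype.card_fun, Fintype.card_fin, nsmul_eq_mul,
    Nat.cast_pow, Finset.sum_add_distrib, ← Finset.mul_sum] at hsum
  have hcard : #(univ.filter (· ∈ late)) = N - m := by
    have := Finset.card_filter_add_card_filter_not (s := univ) (fun a : Fin N => (a : ℕ) < m)
    rw [Fin.card_filter_val_lt, card_univ, Fintype.card_fin, min_eq_right hm] at this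
    simp only [late, filter_mem_eq_inter, univ_inter]
    omega
  have hlast := card_mul_sum_sum_lastShare_filter (χ := χ) N m (· ∈ late)
  rw [hcard, Nat.cast_sub hm] at hlast
  rw [← hlast, ← mul_add]
  exact mul_le_mul_of_nonneg_left hsum (Nat.cast_nonneg N)

lemma totalLastShares_succ_le {N m : ℕ} (hm : m < N) :
    totalLastShares χ N (m + 1)
      ≤ N * (totalPrefixShares χ N (m + 1) - totalPrefixShares χ N m) := by
  have hpoint : ∀ ω : V → Fin N,
      ∑ i ∈ univ.filter (fun i => (ω i : ℕ) = m), lastShare χ (Fin.val ∘ ω) (m + 1) i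
        ≤ revealedPrefixShares χ (Fin.val ∘ ω) (m + 1) - revealedPrefixShares χ (Fin.val ∘ ω) m :=
      fun ω => by
    have hnew : revealed (Fin.val ∘ ω) (m + 1) \ revealed (Fin.val ∘ ω) m
        = univ.filter (fun i => (ω i : ℕ) = m) := by
      ext i
      simp only [mem_sdiff, mem_revealed, Function.comp_apply, mem_filter, mem_univ, true_and]
      omega
    have := hχ.revealedPrefixShares_add_sum_lastShare_le (Fin.val ∘ ω) m
    rw [hnew] at this
    linarith
  have hcard : #(univ.filter (fun a : Fin N => (a : ℕ) = m)) = 1 :=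
    Finset.card_eq_one.2 ⟨⟨m, hm⟩, by ext a; simp [Fin.ext_iff]⟩
  have hlast := card_mul_sum_sum_lastShare_filter (χ := χ) N (m + 1) (fun a => (a : ℕ) = m)
  rw [hcard, Nat.cast_one, one_mul] at hlast
  rw [← hlast, totalPrefixShares, totalPrefixShares, ← Finset.sum_sub_distrib]
  exact mul_le_mul_of_nonneg_left (Finset.sum_le_sum fun ω _ => hpoint ω) (Nat.cast_nonneg N)

end IsCostShare

end Sampling

section Counting

variable {V : Type*} [Fintype V] [DecidableEq V]

lemma sum_revealed_eq_pow_mul {K : ℕ} (hK : 0 < K) (M : ℕ) (F : Finset V → ℝ) :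
    ∑ ω : V → Fin (K * M), F (revealed (Fin.val ∘ ω) M)
      = M ^ Fintype.card V * ∑ g : V → Fin K, F (univ.filter (fun i => g i = ⟨0, hK⟩)) := by
  let e : (V → Fin K) × (V → Fin M) ≃ (V → Fin (K * M)) :=
    (Equiv.arrowProdEquivProdArrow V _ _).symm.trans (Equiv.piCongrRight fun _ => finProdFinEquiv)
  have hrev : ∀ g h, revealed (Fin.val ∘ e (g, h)) M = univ.filter (fun i => g i = ⟨0, hK⟩) := by
    intro g h
    ext i
    simp only [e, mem_revealed, mem_filter, mem_univ, true_and, Function.comp_apply,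
      Equiv.trans_apply, Equiv.piCongrRight_apply, Pi.map_apply,
      Equiv.arrowProdEquivProdArrow_symm_apply, finProdFinEquiv_apply_val, Fin.ext_iff]
    constructor
    · intro hi
      by_contra hne
      nlinarith [Nat.one_le_iff_ne_zero.2 hne]
    · intro hi
      simp [hi]
  rw [← e.sum_comp, Fintype.sum_prod_type]
  simp [hrev, Finset.mul_sum]

lemma sum_sum_filter_eq_eq_mul (K : ℕ) (F : Finset V → ℝ) (k₀ : Fin K) :
    ∑ g : V → Fin K, ∑ k, F (univ.filter (fun i => g i = k))
      = K * ∑ g : V → Fin K, F (univ.filter (fun i => g i = k₀)) := by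
  rw [Finset.sum_comm]
  have hk : ∀ k, ∑ g : V → Fin K, F (univ.filter (fun i => g i = k))
      = ∑ g : V → Fin K, F (univ.filter (fun i => g i = k₀)) := fun k => by
    rw [← (Equiv.arrowCongr (Equiv.refl V) (Equiv.swap k k₀)).sum_comp]
    simp [Equiv.swap_apply_eq_iff]
  simp [hk]

end Counting

section Welfare

open Function Filter Topology

variable {V : Type*} [Fintype V] [DecidableEq V] {f : Finset V → ℝ} {η β : ℝ}
  {χ : List V → V → ℝ}

noncomputable def randomAssignmentWelfare (K : ℕ) (f : Finset V → ℝ) : ℝ :=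
  1 / (K : ℝ) ^ Fintype.card V * ∑ g : V → Fin K, ∑ k, f (univ.filter (fun i => g i = k))

namespace IsCostShare

variable (hχ : IsCostShare f η β χ) (hmono : Monotone f) (hf0 : f ∅ = 0) (hβ : 0 ≤ β) {K : ℕ}
  (hK : 0 < K) (A : Fin K → Finset V) (hA : Pairwise (Disjoint on A))
  (hcover : univ.biUnion A = univ)
include hχ hmono hf0 hβ hK hA hcover

lemma pow_sub_pow_mul_le_sum_revealed {N M : ℕ} (hMN : M ≤ N) :
    ((N - 1 + K : ℝ) ^ K - (N - 1 + K - M) ^ K) * (N ^ Fintype.card V * ((∑ k, f (A k)) / β))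
      ≤ (N - 1 + K : ℝ) ^ K * (K * (η * ∑ ω : V → Fin N, f (revealed (Fin.val ∘ ω) M))) := by
  set a : ℝ := N ^ Fintype.card V * ((∑ k, f (A k)) / β)
  have ha : 0 ≤ a := mul_nonneg (by positivity) (div_nonneg (Finset.sum_nonneg fun k _ =>
    hf0 ▸ hmono (Finset.empty_subset _)) hβ)
  have hK1 : (1 : ℝ) ≤ K := by exact_mod_cast hK
  have hM : (M : ℝ) ≤ N := by exact_mod_cast hMN
  have hstep : ∀ m < M, ((N - 1 + K : ℝ) - m) * (a - K * totalPrefixShares χ N (m + 1))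
      ≤ ((N - 1 + K : ℝ) - m - K) * (a - K * totalPrefixShares χ N m) := fun m hm => by
    have hmN : m < N := hm.trans_le hMN
    have hN : (0 : ℝ) < N := by exact_mod_cast (Nat.zero_lt_of_lt hmN)
    have hgap : (0 : ℝ) ≤ N - (m + 1) := by
      have : ((m + 1 : ℕ) : ℝ) ≤ N := by exact_mod_cast hmN
      push_cast at this
      linarith
    have hbudget := hχ.le_totalPrefixShares_add_totalLastShares hmono hf0 hβ A hA hcover hmN
    have hgrowth := mul_le_mul_of_nonneg_left (hχ.totalLastShares_succ_le hmN) hgap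
    push_cast at hbudget
    have hnext : a ≤ K * totalPrefixShares χ N (m + 1)
        + (N - (m + 1)) * (totalPrefixShares χ N (m + 1) - totalPrefixShares χ N m) := by
      refine le_of_mul_le_mul_left ?_ hN
      nlinarith
    nlinarith
  have hrec := pow_mul_le_pow_mul_of_recurrence (y := fun m => a - K * totalPrefixShares χ N m)
    (u := N - 1 + K) hK (by linarith) (by simpa [totalPrefixShares_zero] using ha) hstep
  have hP := hχ.totalPrefixShares_le hf0 N M
  simp only [totalPrefixShares_zero, mul_zero, sub_zero] at hrec
  have hu : (0 : ℝ) ≤ (N - 1 + K) ^ K := pow_nonneg (by linarith [(N.cast_nonneg : (0 : ℝ) ≤ N)]) K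
  nlinarith [mul_le_mul_of_nonneg_left hP (mul_nonneg hu (by linarith : (0 : ℝ) ≤ K))]

lemma le_randomAssignmentWelfare_of_steps {M : ℕ} (hM : 0 < M) :
    (1 - ((K * M - 1 + K - M) / (K * M - 1 + K) : ℝ) ^ K) * ((∑ k, f (A k)) / β)
      ≤ η * randomAssignmentWelfare K f := by
  have h := hχ.pow_sub_pow_mul_le_sum_revealed hmono hf0 hβ hK A hA hcover
    (Nat.le_mul_of_pos_left M hK)
  rw [sum_revealed_eq_pow_mul hK] at h
  rw [randomAssignmentWelfare, sum_sum_filter_eq_eq_mul K f ⟨0, hK⟩]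
  push_cast at h
  have hK1 : (1 : ℝ) ≤ K := by exact_mod_cast hK
  have hM1 : (1 : ℝ) ≤ M := by exact_mod_cast hM
  set u : ℝ := K * M - 1 + K
  have hu : 0 < u := by nlinarith
  have hpos : 0 < u ^ K * ((K : ℝ) ^ Fintype.card V * M ^ Fintype.card V) := by positivity
  refine le_of_mul_le_mul_right ?_ hpos
  calc (1 - ((u - M) / u) ^ K) * ((∑ k, f (A k)) / β)
        * (u ^ K * (K ^ Fintype.card V * M ^ Fintype.card V))
      = (u ^ K - (u - M) ^ K) * ((K * M) ^ Fintype.card V * ((∑ k, f (A k)) / β)) := by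
        rw [div_pow, one_sub_div (pow_pos hu K).ne', mul_pow]
        field_simp
    _ ≤ _ := h
    _ = _ := by field_simp

lemma le_randomAssignmentWelfare :
    (1 - (1 - 1 / K : ℝ) ^ K) * ((∑ k, f (A k)) / β)
      ≤ η * randomAssignmentWelfare K f := by
  have hK1 : (1 : ℝ) ≤ K := by exact_mod_cast hK
  have hinv : Tendsto (fun M : ℕ => 1 - ((K : ℝ) + (K - 1) / M)⁻¹) atTop (𝓝 (1 - (K + 0 : ℝ)⁻¹)) :=
    tendsto_const_nhds.sub ((tendsto_const_nhds.add (tendsto_const_div_atTop_nhds_zero_nat _)).inv₀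
      (by positivity))
  have hratio : Tendsto (fun M : ℕ => ((K * M - 1 + K - M) / (K * M - 1 + K) : ℝ)) atTop
      (𝓝 (1 - 1 / K)) := by
    rw [add_zero, ← one_div] at hinv
    refine hinv.congr' (eventually_atTop.2 ⟨1, fun M hM => ?_⟩)
    have hM1 : (1 : ℝ) ≤ M := by exact_mod_cast hM
    have hu : (K : ℝ) * M - 1 + K ≠ 0 := by nlinarith
    have : (K : ℝ) + (K - 1) / M = (K * M - 1 + K) / M := by
      field_simp
      ring
    rw [this, inv_div, one_sub_div hu]
  exact le_of_tendsto (((hratio.pow K).const_sub 1).mul_const _)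
    (eventually_atTop.2 ⟨1, fun M hM =>
      hχ.le_randomAssignmentWelfare_of_steps hmono hf0 hβ hK A hA hcover hM⟩)

end IsCostShare

end Welfare

/-- Welfare maximization: if the `n` goods of `V` are assigned independently and
uniformly at random among `K` players, each having the same non-decreasing utility `f`
(with `f ∅ = 0`) admitting an `(η,β)`-cost-sharing scheme, then the expected total
welfare is at least `(1/(ηβ))·(1-1/e)` times the welfare `Σ_k f(A_k)` of any partition
`A_1, …, A_K` of the goods (in particular, of the optimal partition). -/
theorem welfare_maximization_random_assignment
    {V : Type*} [Fintype V] [DecidableEq V]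
    (K : ℕ) (hK : 1 ≤ K)
    (f : Finset V → ℝ)
    (hmono : ∀ S T : Finset V, S ⊆ T → f S ≤ f T)
    (hf0 : f ∅ = 0)
    (η β : ℝ) (hη : 1 ≤ η) (hβ : 1 ≤ β)
    (χ : List V → V → ℝ) (hχ : IsCostShare f η β χ)
    (A : Fin K → Finset V)
    (hdisj : ∀ k l : Fin K, k ≠ l → Disjoint (A k) (A l))
    (hcover : Finset.univ.biUnion A = Finset.univ) :
    (1 / (η * β)) * (1 - 1 / Real.exp 1) * ∑ k : Fin K, f (A k)
      ≤ (1 / (K : ℝ) ^ (Fintype.card V))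
          * ∑ g : V → Fin K, ∑ k : Fin K, f (Finset.univ.filter (fun i => g i = k)) := by
  have hη0 : 0 < η := one_pos.trans_le hη
  have hβ0 : 0 < β := one_pos.trans_le hβ
  have hwelfare := hχ.le_randomAssignmentWelfare (fun S T h => hmono S T h) hf0 hβ0.le hK A
    (fun k l hkl => hdisj k l hkl) hcover
  have hexp : (1 - 1 / K : ℝ) ^ K ≤ Real.exp (-1) :=
    Real.one_sub_div_pow_le_exp_neg (by exact_mod_cast hK)
  have hopt : 0 ≤ (∑ k, f (A k)) / β :=
    div_nonneg (Finset.sum_nonneg fun k _ => hf0 ▸ hmono ∅ (A k) (Finset.empty_subset _)) hβ0.le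
  rw [one_div (Real.exp 1), ← Real.exp_neg]
  calc 1 / (η * β) * (1 - Real.exp (-1)) * ∑ k, f (A k)
      = (1 - Real.exp (-1)) * ((∑ k, f (A k)) / β) / η := by field_simp
    _ ≤ (1 - (1 - 1 / K : ℝ) ^ K) * ((∑ k, f (A k)) / β) / η := by gcongr
    _ ≤ _ := by
        rw [div_le_iff₀ hη0, mul_comm _ η]
        exact hwelfare
end

section
/- Let n ≥ 1, let V be a ground set with |V| = n, let f(S) = max(|S| − (n−1), 0) for S ⊆ V, and let p_i = 1/2 for every i ∈ V. Then: (a) f is supermodular and non-decreasing in S; (b) the distribution assigning probability 1/2 to V and 1/2 to ∅ has marginals {1/2}, so the worst-case expected value satisfies L(f,V,{1/2}) ≥ 1/2; (c) the independent expected value is I(f,V,{1/2}) = 2^{−n}. Consequently the correlation gap L/I is at least 2^{n−1}, i.e., it is Ω(2^n) for supermodular functions. -/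
open Finset

variable {W : Type*} [Fintype W] [DecidableEq W]

/-! On a ground set of size `n`, `max(|S| - (n-1), 0)` is the indicator of `S = V`.  Its
expectation is therefore the probability of drawing the whole ground set: `1/2` under the
distribution putting mass `1/2` on `V` and on `∅`, but only `2⁻ⁿ` under independent sampling. -/

def univIndicator (S : Finset W) : ℝ :=
  if S = univ then 1 else 0

theorem max_card_sub_card_sub_one_eq_univIndicator (S : Finset W) :
    max ((S.card : ℝ) - ((Fintype.card W : ℝ) - 1)) 0 = univIndicator S := by
  unfold univIndicator
  split_ifs with hS
  · simp [hS]
  · have hlt : (S.card : ℝ) + 1 ≤ Fintype.card W := by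
      exact_mod_cast S.card_lt_iff_ne_univ.mpr hS
    exact max_eq_right (by linarith)

theorem univIndicator_le_one (S : Finset W) : univIndicator S ≤ 1 := by
  unfold univIndicator
  split_ifs <;> norm_num

theorem monotone_univIndicator : Monotone (univIndicator (W := W)) := by
  intro S T hST
  unfold univIndicator
  by_cases hS : S = univ
  · simp [hS, univ_subset_iff.mp (hS ▸ hST)]
  · by_cases hT : T = univ <;> simp [hS, hT]

theorem univIndicator_supermodular {T S : Finset W} (hTS : T ⊆ S) {i : W} (hi : i ∉ S) :
    univIndicator (insert i T) - univIndicator T ≤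
      univIndicator (insert i S) - univIndicator S := by
  have hS : S ≠ univ := fun h ↦ hi (h ▸ mem_univ i)
  have hT : T ≠ univ := fun h ↦ hS (univ_subset_iff.mp (h ▸ hTS))
  simpa [univIndicator, hS, hT] using monotone_univIndicator (insert_subset_insert i hTS)

theorem expVal_univIndicator (α : Finset W → ℝ) : expVal α univIndicator = α univ := by
  simp [expVal, univIndicator]

theorem indepVal_univIndicator (p : W → ℝ) : indepVal p univIndicator = ∏ i, p i := by
  simp [indepVal, univIndicator]

theorem IsDistWithMarginals.expVal_le {p : W → ℝ} {α f : Finset W → ℝ} {c : ℝ}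
    (hα : IsDistWithMarginals p α) (hf : ∀ S, f S ≤ c) : expVal α f ≤ c :=
  calc expVal α f ≤ ∑ S, α S * c := sum_le_sum fun S _ ↦ mul_le_mul_of_nonneg_left (hf S) (hα.1 S)
    _ = c := by rw [← sum_mul, hα.2.1, one_mul]

theorem IsDistWithMarginals.expVal_le_worstVal {p : W → ℝ} {α f : Finset W → ℝ} {c : ℝ}
    (hα : IsDistWithMarginals p α) (hf : ∀ S, f S ≤ c) : expVal α f ≤ worstVal p f :=
  le_csSup ⟨c, by rintro _ ⟨β, hβ, rfl⟩; exact hβ.expVal_le hf⟩ ⟨α, hα, rfl⟩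

theorem isDistWithMarginals_half_univ_half_empty [Nonempty W] :
    IsDistWithMarginals (fun _ : W => (1 : ℝ) / 2)
      (fun S => if S = univ ∨ S = ∅ then 1 / 2 else 0) := by
  have huniv : (univ : Finset W) ≠ ∅ := univ_nonempty.ne_empty
  refine ⟨fun S => by positivity, ?_, fun i => ?_⟩
  · have hsupp : (univ.filter fun S : Finset W => S = univ ∨ S = ∅) = {univ, ∅} := by
      ext S; simp
    rw [← sum_filter, hsupp, sum_pair huniv]
    norm_num
  · rw [sum_eq_single_of_mem univ (by simp)]
    · simp
    · intro S hS hSu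
      have hSe : S ≠ ∅ := ne_empty_of_mem (mem_filter.mp hS).2
      simp [hSu, hSe]

/-- Example 1 (core): for `f(S) = max(|S| - (n-1), 0)` on a ground set of size `n` with
all marginals `1/2`: (a) `f` is non-decreasing and supermodular; (b) the distribution
putting mass `1/2` on `V` and `1/2` on `∅` has marginals `1/2`, so `L ≥ 1/2`;
(c) `I = 2^{-n}`; hence the correlation gap is at least `2^{n-1}`. -/
theorem supermodular_exponential_gap
    {V : Type*} [Fintype V] [DecidableEq V]
    (n : ℕ) (hn : 1 ≤ n) (hcard : Fintype.card V = n)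
    (f : Finset V → ℝ)
    (hf : ∀ S : Finset V, f S = max ((S.card : ℝ) - ((n : ℝ) - 1)) 0)
    (α : Finset V → ℝ)
    (hα : ∀ S : Finset V, α S = if S = Finset.univ ∨ S = ∅ then 1 / 2 else 0) :
    -- (a) non-decreasing and supermodular
    (∀ S T : Finset V, S ⊆ T → f S ≤ f T)
    ∧ (∀ T S : Finset V, T ⊆ S → ∀ i ∉ S, f (insert i T) - f T ≤ f (insert i S) - f S)
    -- (b) the half-half distribution has marginals 1/2 and L ≥ 1/2
    ∧ IsDistWithMarginals (fun _ : V => (1 : ℝ) / 2) α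
    ∧ expVal α f = 1 / 2
    ∧ (1 / 2 : ℝ) ≤ worstVal (fun _ : V => (1 : ℝ) / 2) f
    -- (c) I = 2⁻ⁿ and the correlation gap is at least 2^(n-1)
    ∧ indepVal (fun _ : V => (1 : ℝ) / 2) f = ((2 : ℝ))⁻¹ ^ n
    ∧ (2 : ℝ) ^ (n - 1) * indepVal (fun _ : V => (1 : ℝ) / 2) f
        ≤ worstVal (fun _ : V => (1 : ℝ) / 2) f := by
  have : Nonempty V := Fintype.card_pos_iff.mp (by omega)
  obtain rfl : f = univIndicator :=
    funext fun S => by rw [hf, ← hcard, max_card_sub_card_sub_one_eq_univIndicator]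
  have hdist : IsDistWithMarginals (fun _ : V => (1 : ℝ) / 2) α := by
    rw [funext hα]
    exact isDistWithMarginals_half_univ_half_empty
  have hexp : expVal α univIndicator = 1 / 2 := by simp [expVal_univIndicator, hα]
  have hL : (1 / 2 : ℝ) ≤ worstVal (fun _ : V => (1 : ℝ) / 2) univIndicator :=
    hexp ▸ hdist.expVal_le_worstVal univIndicator_le_one
  have hI : indepVal (fun _ : V => (1 : ℝ) / 2) univIndicator = (2 : ℝ)⁻¹ ^ n := by
    simp [indepVal_univIndicator, hcard]
  have hgap : (2 : ℝ) ^ (n - 1) * (2 : ℝ)⁻¹ ^ n = 1 / 2 := by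
    obtain ⟨m, rfl⟩ := Nat.exists_eq_add_of_le' hn
    simp [pow_succ]
  refine ⟨fun _ _ h ↦ monotone_univIndicator h, fun _ _ h _ hi ↦ univIndicator_supermodular h hi,
    hdist, hexp, hL, hI, ?_⟩
  rwa [hI, hgap]
end

section
/- Let n ≥ 1, let V be a ground set with |V| = n, let f(S) = 1 if S ≠ ∅ and f(∅) = 0, and let p_i = 1/n for every i ∈ V. Then f is non-decreasing and submodular, the worst-case expected value is L(f,V,{1/n}) = 1 (attained by the uniform distribution on the n singletons), and the independent expected value is I(f,V,{1/n}) = 1 − (1−1/n)^n. Consequently the correlation gap equals 1/(1−(1−1/n)^n), which converges to e/(e−1) as n → ∞; hence the bound e/(e−1) on the correlation gap of non-decreasing submodular functions is tight. -/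
open Finset

variable {W : Type*} [Fintype W] [DecidableEq W]

/-!
Since `f ≤ 1`, no distribution gives expected value above `1`, and the uniform distribution on
the singletons has marginals `1/n` and is supported where `f = 1`; hence `L = 1`. Under
independent sampling `f` vanishes only on the empty set, whose probability is
`∏ i, (1 - p i) = (1 - 1/n)^n → e⁻¹`.
-/

open Filter Topology

section NonemptyIndicator

variable {ι : Type*} [DecidableEq ι]

def nonemptyIndicator (S : Finset ι) : ℝ := if S = ∅ then 0 else 1

lemma nonemptyIndicator_le_one (S : Finset ι) : nonemptyIndicator S ≤ 1 := by
  unfold nonemptyIndicator; split_ifs <;> norm_num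

lemma nonemptyIndicator_of_ne_empty {S : Finset ι} (hS : S ≠ ∅) : nonemptyIndicator S = 1 :=
  if_neg hS

lemma nonemptyIndicator_mono : Monotone (nonemptyIndicator : Finset ι → ℝ) := by
  intro S T hST
  by_cases hS : S = ∅
  · simp only [nonemptyIndicator, hS, if_true]
    split_ifs <;> norm_num
  · have hT : T ≠ ∅ := fun hT => hS (subset_empty.mp (hT ▸ hST))
    rw [nonemptyIndicator_of_ne_empty hS, nonemptyIndicator_of_ne_empty hT]

lemma nonemptyIndicator_insert_sub_le {T S : Finset ι} (hTS : T ⊆ S) (i : ι) :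
    nonemptyIndicator (insert i S) - nonemptyIndicator S
      ≤ nonemptyIndicator (insert i T) - nonemptyIndicator T := by
  rw [nonemptyIndicator_of_ne_empty (insert_ne_empty i S),
    nonemptyIndicator_of_ne_empty (insert_ne_empty i T)]
  linarith [nonemptyIndicator_mono hTS]

end NonemptyIndicator

section Distributions

variable {p : W → ℝ} {α f : Finset W → ℝ} {c : ℝ}

lemma expVal_le_of_le (hα : IsDistWithMarginals p α) (hf : ∀ S, f S ≤ c) :
    expVal α f ≤ c := by
  obtain ⟨hα_nonneg, hα_sum, -⟩ := hα
  calc expVal α f = ∑ S, α S * f S := rfl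
    _ ≤ ∑ S, α S * c := sum_le_sum fun S _ => mul_le_mul_of_nonneg_left (hf S) (hα_nonneg S)
    _ = c := by rw [← sum_mul, hα_sum, one_mul]

lemma expVal_eq_of_eq_on_support (hα : IsDistWithMarginals p α)
    (hf : ∀ S, α S ≠ 0 → f S = c) : expVal α f = c := by
  obtain ⟨-, hα_sum, -⟩ := hα
  calc expVal α f = ∑ S, α S * c := sum_congr rfl fun S _ => by
        by_cases hS : α S = 0
        · rw [hS, zero_mul, zero_mul]
        · rw [hf S hS]
    _ = c := by rw [← sum_mul, hα_sum, one_mul]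

lemma isGreatest_expVal (hα : IsDistWithMarginals p α) (hf : ∀ S, f S ≤ c)
    (hαf : expVal α f = c) :
    IsGreatest {v | ∃ γ, IsDistWithMarginals p γ ∧ v = expVal γ f} c :=
  ⟨⟨α, hα, hαf.symm⟩, by
    rintro v ⟨γ, hγ, rfl⟩
    exact expVal_le_of_le hγ hf⟩

omit [DecidableEq W] in
lemma card_filter_card_eq_one :
    (univ.filter fun S : Finset W => S.card = 1).card = Fintype.card W := by
  have h : univ.filter (fun S : Finset W => S.card = 1)
      = powersetCard 1 univ := by
    ext S; simp
  rw [h, card_powersetCard, card_univ, Nat.choose_one_right]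

lemma isDistWithMarginals_uniform_singletons (hW : Fintype.card W ≠ 0) :
    IsDistWithMarginals (fun _ : W => 1 / (Fintype.card W : ℝ))
      (fun S => if S.card = 1 then 1 / (Fintype.card W : ℝ) else 0) := by
  refine ⟨fun S => by dsimp only; split_ifs <;> positivity, ?_, fun i => ?_⟩
  · rw [← sum_filter, sum_const, card_filter_card_eq_one, nsmul_eq_mul]
    field_simp
  · rw [sum_eq_single_of_mem {i} (by simp)]
    · simp
    · intro S hS hSi
      rw [if_neg]
      rintro hS1
      obtain ⟨a, rfl⟩ := card_eq_one.mp hS1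
      obtain rfl : i = a := mem_singleton.mp (mem_filter.mp hS).2
      exact hSi rfl

end Distributions

lemma sum_prod_mul_prod_compl_one_sub (p : W → ℝ) :
    ∑ S : Finset W, (∏ i ∈ S, p i) * ∏ i ∈ Sᶜ, (1 - p i) = 1 := by
  have h := prod_add p (fun i => 1 - p i) univ
  simp only [add_sub_cancel, prod_const_one, powerset_univ] at h
  simpa only [compl_eq_univ_sdiff] using h.symm

lemma indepVal_nonemptyIndicator (p : W → ℝ) :
    indepVal p nonemptyIndicator = 1 - ∏ i, (1 - p i) := by
  have hf : ∀ S : Finset W, nonemptyIndicator S = 1 - if ∅ = S then 1 else 0 := by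
    intro S
    by_cases hS : S = ∅
    · simp [nonemptyIndicator, hS]
    · simp [nonemptyIndicator, hS, Ne.symm hS]
  simp only [indepVal, hf, mul_sub, mul_one, mul_ite, mul_zero, sum_sub_distrib,
    sum_prod_mul_prod_compl_one_sub, sum_ite_eq, mem_univ, if_true,
    prod_empty, compl_empty, one_mul]

lemma tendsto_inv_one_sub_one_sub_inv_pow :
    Tendsto (fun m : ℕ => (1 - (1 - 1 / (m : ℝ)) ^ m)⁻¹) atTop
      (𝓝 (Real.exp 1 / (Real.exp 1 - 1))) := by
  have hpow : Tendsto (fun m : ℕ => (1 - 1 / (m : ℝ)) ^ m) atTop (𝓝 (Real.exp (-1))) := by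
    simpa [sub_eq_add_neg, neg_div] using Real.tendsto_one_add_div_pow_exp (-1)
  have hlt : Real.exp (-1) < 1 := Real.exp_lt_one_iff.mpr (by norm_num)
  have hlim : (1 - Real.exp (-1))⁻¹ = Real.exp 1 / (Real.exp 1 - 1) := by
    have he : 1 < Real.exp 1 := Real.one_lt_exp_iff.mpr one_pos
    rw [Real.exp_neg]
    field_simp
  rw [← hlim]
  exact (tendsto_const_nhds.sub hpow).inv₀ (by linarith)

/-- Example 3 (tightness): for `f(S) = 1` if `S ≠ ∅`, `f(∅) = 0`, on a ground set of
size `n` with all marginals `1/n`: `f` is non-decreasing and submodular; the uniform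
distribution on the singletons is a worst-case distribution with `L = 1`; the independent
expected value is `I = 1 - (1-1/n)^n`; hence the correlation gap equals
`1/(1-(1-1/n)^n)`, which converges to `e/(e-1)` as `n → ∞` — so the bound `e/(e-1)`
for submodular functions is tight. -/
theorem submodular_gap_tight
    {V : Type*} [Fintype V] [DecidableEq V]
    (n : ℕ) (hn : 1 ≤ n) (hcard : Fintype.card V = n)
    (f : Finset V → ℝ)
    (hf : ∀ S : Finset V, f S = if S = ∅ then 0 else 1)
    (α : Finset V → ℝ)
    (hα : ∀ S : Finset V, α S = if S.card = 1 then 1 / (n : ℝ) else 0) :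
    -- non-decreasing and submodular
    (∀ S T : Finset V, S ⊆ T → f S ≤ f T)
    ∧ (∀ T S : Finset V, T ⊆ S → ∀ i : V,
        f (insert i S) - f S ≤ f (insert i T) - f T)
    -- the uniform distribution on singletons attains the worst case, L = 1
    ∧ IsDistWithMarginals (fun _ : V => 1 / (n : ℝ)) α
    ∧ expVal α f = 1
    ∧ IsGreatest
        {v | ∃ γ, IsDistWithMarginals (fun _ : V => 1 / (n : ℝ)) γ ∧ v = expVal γ f} 1
    ∧ worstVal (fun _ : V => 1 / (n : ℝ)) f = 1
    -- the independent expected value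
    ∧ indepVal (fun _ : V => 1 / (n : ℝ)) f = 1 - (1 - 1 / (n : ℝ)) ^ n
    -- the correlation gap converges to e/(e-1)
    ∧ Filter.Tendsto (fun m : ℕ => (1 - (1 - 1 / (m : ℝ)) ^ m)⁻¹) Filter.atTop
        (nhds (Real.exp 1 / (Real.exp 1 - 1))) := by
  subst hcard
  obtain rfl : f = nonemptyIndicator := funext hf
  obtain rfl := funext hα
  have hdist := isDistWithMarginals_uniform_singletons (W := V) (by omega)
  have hexp : expVal _ nonemptyIndicator = 1 := expVal_eq_of_eq_on_support hdist fun S hS =>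
    nonemptyIndicator_of_ne_empty fun h => hS (by simp [h])
  have hgreat := isGreatest_expVal hdist nonemptyIndicator_le_one hexp
  refine ⟨fun _ _ hST => nonemptyIndicator_mono hST, fun T S => nonemptyIndicator_insert_sub_le,
    hdist, hexp, hgreat, hgreat.csSup_eq, ?_, tendsto_inv_one_sub_one_sub_inv_pow⟩
  rw [indepVal_nonemptyIndicator, prod_const, card_univ]
end

section
/- For every λ > 0 there exist a constant C > 0 and an integer M_0 such that for all M ≥ M_0, if X_1, ..., X_M are independent identically distributed Poisson random variables with mean λ, then E[max_{1≤i≤M} X_i] ≤ C·log M / log log M. -/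
open MeasureTheory ProbabilityTheory Real Finset Filter
open scoped ENNReal NNReal Nat

/-!
For any cutoff `K`, `max_i X_i ≤ K + ∑_i (X_i - K)⁺`, and for `X ~ Poisson(λ)` the shifted tail sum
gives `E (X - K)⁺ ≤ λ^(K+1) / K!`; hence `E max_i X_i ≤ K + M λ^(K+1) / K!`. Taking
`K = ⌈2 log M / log log M⌉`, the bound `K! ≥ (K/e)^K` makes `M λ^(K+1) / K! ≤ 1` once `log log M` is
large compared with `|log λ|`, so `E max_i X_i ≤ K + 1 ≤ 4 log M / log log M`.
-/

theorem Nat.succ_mul_factorial_mul_factorial_le (j K : ℕ) :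
    (j + 1) * (K ! * j !) ≤ (j + (K + 1))! :=
  calc (j + 1) * (K ! * j !) = K ! * (j + 1)! := by rw [Nat.factorial_succ]; ring
    _ ≤ (K + (j + 1))! :=
      Nat.le_of_dvd (Nat.factorial_pos _) (Nat.factorial_mul_factorial_dvd_factorial_add _ _)
    _ = (j + (K + 1))! := by rw [add_left_comm, add_comm K]

theorem Finset.sup_le_add_sum_tsub {ι : Type*} (s : Finset ι) (f : ι → ℕ) (K : ℕ) :
    s.sup f ≤ K + ∑ i ∈ s, (f i - K) :=
  Finset.sup_le fun _ hi => le_add_tsub.trans <|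
    Nat.add_le_add_left (Finset.single_le_sum (f := (f · - K)) (fun _ _ => Nat.zero_le _) hi) K

namespace ProbabilityTheory

theorem hasLaw_poissonMeasure_of_measureReal {Ω : Type*} [MeasurableSpace Ω] {P : Measure Ω}
    [IsFiniteMeasure P] {Y : Ω → ℕ} (hY : Measurable Y) {r : ℝ≥0}
    (h : ∀ k : ℕ, P.real {ω | Y ω = k} = exp (-r) * r ^ k / k !) : HasLaw Y Po(r) P where
  aemeasurable := hY.aemeasurable
  map_eq := Measure.ext_of_measureReal_singleton fun k => by
    rw [map_measureReal_apply hY (measurableSet_singleton k), poissonMeasure_real_singleton]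
    exact h k

theorem succ_mul_poisson_pmf_le (r : ℝ≥0) (j K : ℕ) :
    (j + 1) * (exp (-r) * r ^ (j + (K + 1)) / (j + (K + 1))!)
      ≤ r ^ (K + 1) / K ! * (exp (-r) * r ^ j / j !) := by
  have hfac : ((j + 1) * (K ! * j !) : ℝ) ≤ (j + (K + 1))! := by
    exact_mod_cast Nat.succ_mul_factorial_mul_factorial_le j K
  have hc : ((j : ℝ) + 1) / (j + (K + 1))! ≤ 1 / (K ! * j !) := by
    rw [div_le_div_iff₀ (by positivity) (by positivity)]
    linarith
  calc (j + 1) * (exp (-r) * r ^ (j + (K + 1)) / (j + (K + 1))!)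
      = exp (-r) * r ^ j * r ^ (K + 1) * ((j + 1) / (j + (K + 1))!) := by rw [pow_add]; ring
    _ ≤ exp (-r) * r ^ j * r ^ (K + 1) * (1 / (K ! * j !)) := by gcongr
    _ = r ^ (K + 1) / K ! * (exp (-r) * r ^ j / j !) := by field_simp

theorem lintegral_tsub_poissonMeasure_le (r : ℝ≥0) (K : ℕ) :
    ∫⁻ n, ((n - K : ℕ) : ℝ≥0∞) ∂Po(r) ≤ ENNReal.ofReal (r ^ (K + 1) / K !) := by
  have hshift : ∑' n, ((n - K : ℕ) : ℝ≥0∞) * Po(r) {n}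
      = ∑' j, ((j + 1 : ℕ) : ℝ≥0∞) * Po(r) {j + (K + 1)} := by
    rw [← Summable.sum_add_tsum_nat_add' (k := K + 1) ENNReal.summable,
      Finset.sum_eq_zero fun n hn => by
        simp [Nat.sub_eq_zero_of_le (Nat.lt_succ_iff.mp (Finset.mem_range.mp hn))], zero_add]
    exact tsum_congr fun j => by rw [show j + (K + 1) - K = j + 1 by omega]
  calc ∫⁻ n, ((n - K : ℕ) : ℝ≥0∞) ∂Po(r)
      = ∑' j, ((j + 1 : ℕ) : ℝ≥0∞) * Po(r) {j + (K + 1)} := by rw [lintegral_countable', hshift]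
    _ ≤ ∑' j, ENNReal.ofReal (r ^ (K + 1) / K !) * Po(r) {j} := by
      refine ENNReal.tsum_le_tsum fun j => ?_
      rw [poissonMeasure_singleton, poissonMeasure_singleton, ← ENNReal.ofReal_natCast,
        ← ENNReal.ofReal_mul (by positivity), ← ENNReal.ofReal_mul (by positivity)]
      exact ENNReal.ofReal_le_ofReal (by exact_mod_cast succ_mul_poisson_pmf_le r j K)
    _ = ENNReal.ofReal (r ^ (K + 1) / K !) := by
      have hsum : ∑' j, Po(r) {j} = 1 := by simpa using (lintegral_countable' (μ := Po(r)) 1).symm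
      rw [ENNReal.tsum_mul_left, hsum, mul_one]

end ProbabilityTheory

section MaxExpectation

variable {Ω ι : Type*} [MeasurableSpace Ω] [Fintype ι] (μ : Measure Ω) [IsProbabilityMeasure μ]
  {X : ι → Ω → ℕ}

theorem lintegral_sup_le_add_sum_lintegral_tsub (hX : ∀ i, Measurable (X i)) (K : ℕ) :
    ∫⁻ ω, ((univ.sup (X · ω) : ℕ) : ℝ≥0∞) ∂μ
      ≤ K + ∑ i, ∫⁻ ω, ((X i ω - K : ℕ) : ℝ≥0∞) ∂μ := by
  have hXK : ∀ i, Measurable fun ω => ((X i ω - K : ℕ) : ℝ≥0∞) := fun i =>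
    (measurable_from_nat (f := fun n => ((n - K : ℕ) : ℝ≥0∞))).comp (hX i)
  calc ∫⁻ ω, ((univ.sup (X · ω) : ℕ) : ℝ≥0∞) ∂μ
      ≤ ∫⁻ ω, ((K : ℝ≥0∞) + ∑ i, ((X i ω - K : ℕ) : ℝ≥0∞)) ∂μ :=
        lintegral_mono fun ω => (Nat.mono_cast (univ.sup_le_add_sum_tsub (X · ω) K)).trans_eq
          (by push_cast; rfl)
    _ = K + ∑ i, ∫⁻ ω, ((X i ω - K : ℕ) : ℝ≥0∞) ∂μ := by
        rw [lintegral_add_left measurable_const, lintegral_const, measure_univ, mul_one,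
          lintegral_finsetSum _ fun i _ => hXK i]

theorem integral_sup_le_of_lintegral_tsub_le (hX : ∀ i, Measurable (X i)) (K : ℕ) {b : ℝ}
    (hb : 0 ≤ b)
    (hXK : ∀ i, ∫⁻ ω, ((X i ω - K : ℕ) : ℝ≥0∞) ∂μ ≤ ENNReal.ofReal b) :
    ∫ ω, ((univ.sup (X · ω) : ℕ) : ℝ) ∂μ ≤ K + Fintype.card ι * b := by
  have hsup : Measurable fun ω => ((univ.sup (X · ω) : ℕ) : ℝ) :=
    measurable_of_countable (fun v : ι → ℕ => ((univ.sup v : ℕ) : ℝ)) |>.comp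
      (measurable_pi_lambda _ hX)
  calc ∫ ω, ((univ.sup (X · ω) : ℕ) : ℝ) ∂μ
      = (∫⁻ ω, ((univ.sup (X · ω) : ℕ) : ℝ≥0∞) ∂μ).toReal := by
        rw [integral_eq_lintegral_of_nonneg_ae (.of_forall fun ω => by positivity)
          hsup.aestronglyMeasurable]
        simp_rw [ENNReal.ofReal_natCast]
    _ ≤ ((K : ℝ≥0∞) + Fintype.card ι * ENNReal.ofReal b).toReal := by
        refine ENNReal.toReal_mono (by finiteness) ?_
        calc _ ≤ _ := lintegral_sup_le_add_sum_lintegral_tsub μ hX K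
          _ ≤ _ := by
            grw [Finset.sum_le_sum fun i _ => hXK i]
            simp
    _ = K + Fintype.card ι * b := by
        rw [ENNReal.toReal_add (by finiteness) (by finiteness), ENNReal.toReal_mul,
          ENNReal.toReal_ofReal hb]
        simp

end MaxExpectation

theorem mul_pow_le_factorial_of_log_le {x lam : ℝ} (hx : 0 < x) (hlam : 0 < lam) {K : ℕ}
    (hK : 0 < K) (h : log x + (K + 1) * log lam + K ≤ K * log K) : x * lam ^ (K + 1) ≤ K ! := by
  have hpow : (K : ℝ) ^ K ≤ exp K * K ! := by
    rw [← div_le_iff₀ (by positivity)]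
    exact pow_div_factorial_le_exp (K : ℝ) K.cast_nonneg K
  calc x * lam ^ (K + 1) = exp (log x + (K + 1) * log lam) := by
        rw [exp_add, exp_log hx, ← Nat.cast_succ, ← log_pow, exp_log (by positivity)]
    _ ≤ exp (K * log K - K) := exp_le_exp.2 (by linarith)
    _ = K ^ K / exp K := by
        rw [exp_sub, ← log_pow, exp_log (by positivity)]
    _ ≤ K ! := by rwa [div_le_iff₀ (exp_pos _), mul_comm]

theorem add_mul_add_le_mul_log {L r c : ℝ} (hL : 0 < L) (hc : 0 ≤ c)
    (hℓ : 12 + 8 * c ≤ log L) (hr : 2 * L / log L ≤ r) : L + (r + 1) * c + r ≤ r * log r := by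
  set ℓ := log L
  have hℓ0 : 0 < ℓ := by linarith
  have hℓL : ℓ < L := (log_le_sub_one_of_pos hL).trans_lt (by linarith)
  have hLℓ : 1 ≤ L / ℓ := (one_le_div hℓ0).2 hℓL.le
  have hr1 : 1 ≤ r := by linarith [mul_div_assoc 2 L ℓ]
  have hrℓ : 2 * L ≤ r * ℓ := (div_le_iff₀ hℓ0).1 hr
  have hlogℓ : log ℓ ≤ ℓ / 4 + 2 := by
    have h4 : log 4 ≤ 3 := by linarith [log_le_sub_one_of_pos (x := 4) (by norm_num)]
    have := log_le_sub_one_of_pos (x := ℓ / 4) (by positivity)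
    rw [log_div hℓ0.ne' (by norm_num)] at this
    linarith
  have hlogr : ℓ - log ℓ ≤ log r := by
    rw [← log_div hL.ne' hℓ0.ne']
    exact log_le_log (by positivity) (by linarith [mul_div_assoc 2 L ℓ])
  -- `r log r ≥ r (ℓ - log ℓ)`; half of `rℓ` pays for `L`, the rest for the terms linear in `r`.
  nlinarith [mul_le_mul_of_nonneg_left hlogr (by linarith : 0 ≤ r),
    mul_le_mul_of_nonneg_left hlogℓ (by linarith : 0 ≤ r),
    mul_le_mul_of_nonneg_left hℓ (by linarith : 0 ≤ r), mul_nonneg (sub_nonneg.2 hr1) hc]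

theorem natCast_add_mul_pow_div_factorial_le {x lam : ℝ} (hx : 1 ≤ x) (hlam : 0 < lam) {K : ℕ}
    (hℓ : 12 + 8 * |log lam| ≤ log (log x)) (hK : 2 * log x / log (log x) ≤ K)
    (hK' : K ≤ 2 * log x / log (log x) + 1) :
    K + x * (lam ^ (K + 1) / K !) ≤ 4 * log x / log (log x) := by
  set L := log x
  set ℓ := log L
  have hL : 0 < L := (log_nonneg hx).lt_of_ne fun h => by
    have : ℓ = 0 := by simp [ℓ, L, ← h]
    linarith [abs_nonneg (log lam)]
  have hℓ0 : 0 < ℓ := by linarith [abs_nonneg (log lam)]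
  have hLℓ : 1 ≤ L / ℓ := (one_le_div hℓ0).2 ((log_le_sub_one_of_pos hL).trans (by linarith))
  have hK0 : 0 < K := by
    have : (0 : ℝ) < K := by linarith [mul_div_assoc 2 L ℓ]
    exact_mod_cast this
  have hlog : log x + (K + 1) * log lam + K ≤ K * log K := by
    linarith [add_mul_add_le_mul_log hL (abs_nonneg _) hℓ hK,
      mul_le_mul_of_nonneg_left (le_abs_self (log lam)) (by positivity : (0 : ℝ) ≤ K + 1)]
  have hsmall : x * (lam ^ (K + 1) / K !) ≤ 1 := by
    rw [mul_div_assoc', div_le_one (by positivity)]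
    exact mul_pow_le_factorial_of_log_le (by linarith) hlam hK0 hlog
  linarith [mul_div_assoc 2 L ℓ, mul_div_assoc 4 L ℓ]

/-- The expected value of the maximum of `M` i.i.d. Poisson(λ) random variables is
`O(log M / log log M)`: for every `λ > 0` there are `C > 0` and `M₀` such that for all
`M ≥ M₀` and every family `X` of independent random variables, each Poisson distributed
with mean `λ`, one has `E[max_i X_i] ≤ C·log M / log log M`. -/
theorem poisson_max_expectation (lam : ℝ) (hlam : 0 < lam) :
    ∃ C : ℝ, 0 < C ∧ ∃ M₀ : ℕ, ∀ M : ℕ, M₀ ≤ M →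
      ∀ (Ω : Type) (_ : MeasureSpace Ω), IsProbabilityMeasure (ℙ : Measure Ω) →
      ∀ X : Fin M → Ω → ℕ, (∀ i, Measurable (X i)) →
      iIndepFun X ℙ →
      (∀ i : Fin M, ∀ k : ℕ,
        (ℙ {ω | X i ω = k}).toReal = Real.exp (-lam) * lam ^ k / (Nat.factorial k)) →
      ∫ ω, ((Finset.univ.sup (fun i : Fin M => X i ω) : ℕ) : ℝ) ∂ℙ
        ≤ C * Real.log M / Real.log (Real.log M) := by
  have hloglog : Tendsto (fun M : ℕ => log (log M)) atTop atTop :=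
    (tendsto_log_atTop.comp tendsto_log_atTop).comp tendsto_natCast_atTop_atTop
  obtain ⟨M₀, hM₀⟩ := eventually_atTop.1
    ((hloglog.eventually_ge_atTop (12 + 8 * |log lam|)).and (eventually_ge_atTop 1))
  refine ⟨4, by norm_num, M₀, fun M hM Ω _ _ X hX _ hpmf => ?_⟩
  obtain ⟨hℓ, hM1⟩ := hM₀ M hM
  set K := ⌈2 * log M / log (log M)⌉₊
  have hlaw : ∀ i, HasLaw (X i) Po(lam.toNNReal) ℙ := fun i =>
    hasLaw_poissonMeasure_of_measureReal (hX i) (by simpa [hlam.le, measureReal_def] using hpmf i)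
  calc ∫ ω, ((univ.sup (X · ω) : ℕ) : ℝ) ∂ℙ
      ≤ K + Fintype.card (Fin M) * (lam ^ (K + 1) / K !) :=
        integral_sup_le_of_lintegral_tsub_le ℙ hX K (by positivity) fun i => by
          rw [(hlaw i).lintegral_comp (f := fun n => ((n - K : ℕ) : ℝ≥0∞)) (by fun_prop)]
          simpa only [Real.coe_toNNReal _ hlam.le] using
            lintegral_tsub_poissonMeasure_le lam.toNNReal K
    _ ≤ 4 * log M / log (log M) := by
        rw [Fintype.card_fin]
        exact natCast_add_mul_pow_div_factorial_le (by exact_mod_cast hM1) hlam hℓ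
          (Nat.le_ceil _) (Nat.ceil_lt_add_one (div_nonneg (by positivity)
            (by linarith [abs_nonneg (log lam)]))).le
end
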